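/- arXiv:2211.13541 — 7 statements merged into one kernel-verified Lean document; each statement's English description precedes it below -/
import Mathlib

section
/- Let Ω > 0, let n ≥ 2 be an integer, and let 0 < σ ≤ m_min. Then there exist a positive discrete measure μ = Σ_{j=1}^n a_j δ_{y_j} with n distinct support points y_j ∈ I(n,Ω) and a_j > 0, and a positive discrete measure μ̂ = Σ_{j=1}^{n−1} â_j δ_{ŷ_j} with n−1 distinct support points and â_j > 0, such that sup_{ω∈[−Ω,Ω]} |Fμ̂(ω) − Fμ(ω)| < σ, min_{1≤j≤n} a_j = m_min, and min_{p≠j} |y_p − y_j| = (2e^{−1}/Ω)·(σ/m_min)^{1/(2n−2)}. -/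
open Real Complex Finset

/-!
Place the binomial weights `c·C(2m,k)` at the nodes `(k - m)h`, `k = 0, …, 2m`, and let `μ` carry
the `m + 1` even and `μ̂` the `m` odd nodes. By the binomial theorem
`Fμ̂(ω) - Fμ(ω) = -c e^{-imhω} (1 - e^{ihω})^{2m}`, of modulus at most `c |hω|^{2m}`.
With `c = m_min`, `h = e⁻¹ t / Ω` and `t^{2m} = σ / c` this is at most `σ e^{-2m} < σ` on
`[-Ω, Ω]`, the even nodes are `2h` apart, and they fit into `I(m + 1, Ω)` because `e⁻¹ ≤ π / 2`.
-/

lemma sum_range_even_add_odd {M : Type*} [AddCommMonoid M] (f : ℕ → M) (m : ℕ) :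
    ∑ k ∈ range (2 * m + 1), f k
      = ∑ j ∈ range (m + 1), f (2 * j) + ∑ j ∈ range m, f (2 * j + 1) := by
  induction m with
  | zero => simp
  | succ m ih =>
    rw [show 2 * (m + 1) + 1 = 2 * m + 1 + 1 + 1 by ring, sum_range_succ, sum_range_succ, ih,
      sum_range_succ (fun j => f (2 * j)) (m + 1), sum_range_succ (fun j => f (2 * j + 1)) m,
      show 2 * (m + 1) = 2 * m + 1 + 1 by ring]
    abel

lemma one_sub_pow_two_mul {R : Type*} [CommRing R] (w : R) (m : ℕ) :
    (1 - w) ^ (2 * m)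
      = ∑ j ∈ range (m + 1), ((2 * m).choose (2 * j) : R) * w ^ (2 * j)
        - ∑ j ∈ range m, ((2 * m).choose (2 * j + 1) : R) * w ^ (2 * j + 1) := by
  rw [sub_eq_neg_add, add_pow, sum_range_even_add_odd, sub_eq_add_neg, ← sum_neg_distrib]
  congr 1 <;> refine sum_congr rfl fun j _ => ?_ <;> simp [pow_succ, pow_mul] <;> ring

noncomputable def discreteFourier {ι : Type*} [Fintype ι] (a y : ι → ℝ) (ω : ℝ) : ℂ :=
  ∑ j, (a j : ℂ) * exp (I * y j * ω)

def gridNode (m : ℕ) (h : ℝ) (k : ℕ) : ℝ := ((k : ℝ) - m) * h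

def binomialWeight (m : ℕ) (c : ℝ) (k : ℕ) : ℝ := c * (2 * m).choose k

lemma exp_I_mul_gridNode (m k : ℕ) (h ω : ℝ) :
    exp (I * gridNode m h k * ω) = exp (-(I * m * h * ω)) * exp (I * h * ω) ^ k := by
  rw [← Complex.exp_nat_mul, ← Complex.exp_add]
  congr 1
  simp only [gridNode]
  push_cast
  ring

lemma discreteFourier_odd_sub_even (m : ℕ) (c h ω : ℝ) :
    discreteFourier (fun j : Fin m => binomialWeight m c (2 * j + 1))
        (fun j => gridNode m h (2 * j + 1)) ω
      - discreteFourier (fun j : Fin (m + 1) => binomialWeight m c (2 * j))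
        (fun j => gridNode m h (2 * j)) ω
      = -(c * exp (-(I * m * h * ω)) * (1 - exp (I * h * ω)) ^ (2 * m)) := by
  simp only [discreteFourier, binomialWeight, exp_I_mul_gridNode]
  rw [Fin.sum_univ_eq_sum_range (fun k => ((c * (2 * m).choose (2 * k + 1) : ℝ) : ℂ) *
      (exp (-(I * m * h * ω)) * exp (I * h * ω) ^ (2 * k + 1))),
    Fin.sum_univ_eq_sum_range (fun k => ((c * (2 * m).choose (2 * k) : ℝ) : ℂ) *
      (exp (-(I * m * h * ω)) * exp (I * h * ω) ^ (2 * k))),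
    one_sub_pow_two_mul, mul_sub, mul_sum, mul_sum]
  simp only [ofReal_mul, ofReal_natCast]
  rw [neg_sub]
  congr 1 <;> refine sum_congr rfl fun j _ => ?_ <;> ring

lemma norm_discreteFourier_odd_sub_even_le (m : ℕ) {c : ℝ} (hc : 0 ≤ c) (h ω : ℝ) :
    ‖discreteFourier (fun j : Fin m => binomialWeight m c (2 * j + 1))
        (fun j => gridNode m h (2 * j + 1)) ω
      - discreteFourier (fun j : Fin (m + 1) => binomialWeight m c (2 * j))
        (fun j => gridNode m h (2 * j)) ω‖ ≤ c * |h * ω| ^ (2 * m) := by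
  rw [discreteFourier_odd_sub_even, norm_neg, norm_mul, norm_mul, norm_pow, norm_real,
    Real.norm_of_nonneg hc, norm_exp]
  have hre : (-(I * m * h * ω)).re = 0 := by simp
  have hw : ‖1 - exp (I * h * ω)‖ ≤ |h * ω| := by
    rw [norm_sub_rev, mul_assoc, ← ofReal_mul]
    exact Real.norm_exp_I_mul_ofReal_sub_one_le
  rw [hre, Real.exp_zero, mul_one]
  gcongr

lemma gridNode_sub (m : ℕ) (h : ℝ) (k l : ℕ) :
    gridNode m h k - gridNode m h l = ((k : ℝ) - l) * h := by
  simp only [gridNode]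
  ring

lemma gridNode_injective (m : ℕ) {h : ℝ} (hh : h ≠ 0) : Function.Injective (gridNode m h) := by
  intro k l hkl
  have := sub_eq_zero.2 hkl
  rw [gridNode_sub, mul_eq_zero, sub_eq_zero] at this
  exact Nat.cast_injective (this.resolve_right hh)

lemma abs_gridNode_le {m : ℕ} {h : ℝ} (hh : 0 ≤ h) {k : ℕ} (hk : k ≤ 2 * m) :
    |gridNode m h k| ≤ m * h := by
  have hk' : (k : ℝ) ≤ 2 * m := by exact_mod_cast hk
  rw [gridNode, abs_mul, abs_of_nonneg hh]
  gcongr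
  rw [abs_le]
  constructor <;> linarith [(k.cast_nonneg : (0 : ℝ) ≤ k)]

lemma two_mul_le_abs_gridNode_even_sub (m : ℕ) {h : ℝ} (hh : 0 ≤ h) {p q : ℕ} (hpq : p ≠ q) :
    2 * h ≤ |gridNode m h (2 * p) - gridNode m h (2 * q)| := by
  have hsep : (1 : ℝ) ≤ |(p : ℝ) - q| := by
    exact_mod_cast Int.one_le_abs (sub_ne_zero.2 (Nat.cast_injective.ne hpq : (p : ℤ) ≠ q))
  rw [gridNode_sub, abs_mul, abs_of_nonneg hh]
  push_cast
  rw [← mul_sub, abs_mul, abs_two]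
  nlinarith

lemma binomialWeight_pos {m : ℕ} {c : ℝ} (hc : 0 < c) {k : ℕ} (hk : k ≤ 2 * m) :
    0 < binomialWeight m c k := by
  have := Nat.choose_pos hk
  unfold binomialWeight
  positivity

lemma isLeast_range_binomialWeight_even {m : ℕ} {c : ℝ} (hc : 0 < c) :
    IsLeast (Set.range fun j : Fin (m + 1) => binomialWeight m c (2 * j)) c := by
  refine ⟨⟨0, by simp [binomialWeight]⟩, ?_⟩
  rintro _ ⟨j, rfl⟩
  have : (1 : ℝ) ≤ (2 * m).choose (2 * j) := by exact_mod_cast Nat.choose_pos (by omega)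
  simp only [binomialWeight]
  nlinarith

lemma exists_binomial_pair {m : ℕ} {c h : ℝ} (hm : 1 ≤ m) (hc : 0 < c) (hh : 0 < h) (Ω : ℝ) :
    ∃ (a y : Fin (m + 1) → ℝ) (b yh : Fin m → ℝ),
      (∀ j, 0 < a j) ∧ Function.Injective y ∧ (∀ j, y j ∈ Set.Icc (-(m * h)) (m * h)) ∧
      (∀ j, 0 < b j) ∧ Function.Injective yh ∧
      (∀ ω ∈ Set.Icc (-Ω) Ω,
        ‖discreteFourier b yh ω - discreteFourier a y ω‖ ≤ c * (h * Ω) ^ (2 * m)) ∧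
      IsLeast (Set.range a) c ∧ (∀ p j, p ≠ j → 2 * h ≤ |y p - y j|) ∧
      ∃ p j, p ≠ j ∧ |y p - y j| = 2 * h := by
  refine ⟨fun j => binomialWeight m c (2 * j), fun j => gridNode m h (2 * j),
    fun j => binomialWeight m c (2 * j + 1), fun j => gridNode m h (2 * j + 1),
    fun j => binomialWeight_pos hc (by omega),
    (gridNode_injective m hh.ne').comp fun p q hpq => Fin.ext (by simpa using hpq),
    fun j => abs_le.1 (abs_gridNode_le hh.le (by omega)),
    fun j => binomialWeight_pos hc (by omega),
    (gridNode_injective m hh.ne').comp fun p q hpq => Fin.ext (by simpa using hpq),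
    fun ω hω => (norm_discreteFourier_odd_sub_even_le m hc.le h ω).trans ?_,
    isLeast_range_binomialWeight_even hc,
    fun p q hpq => two_mul_le_abs_gridNode_even_sub m hh.le (Fin.val_ne_of_ne hpq),
    ⟨⟨1, by omega⟩, ⟨0, by omega⟩, by simp [Fin.ext_iff], ?_⟩⟩
  · rw [abs_mul, abs_of_pos hh]
    gcongr
    exact abs_le.2 hω
  · rw [gridNode_sub]
    norm_num [abs_of_pos hh]

/-- lower bound for the computational resolution limit to number detection
(Theorem `thm:numberlowerboundthm0`). There exist a positive measure with `n` supports in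
`I(n,Ω)` and one with `n-1` supports whose Fourier data differ by less than `σ` on `[-Ω,Ω]`,
with minimal amplitude `m_min` and minimal separation `(2e⁻¹/Ω)·(σ/m_min)^{1/(2n-2)}`. -/
theorem number_detection_lower_bound
    (Ω : ℝ) (hΩ : 0 < Ω) (n : ℕ) (hn : 2 ≤ n)
    (σ mmin : ℝ) (hσ : 0 < σ) (hσm : σ ≤ mmin) :
    ∃ (a y : Fin n → ℝ) (b yh : Fin (n - 1) → ℝ),
      (∀ j, 0 < a j) ∧ Function.Injective y ∧
      (∀ j, y j ∈ Set.Icc (-(((n : ℝ) - 1) * π / (2 * Ω))) (((n : ℝ) - 1) * π / (2 * Ω))) ∧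
      (∀ j, 0 < b j) ∧ Function.Injective yh ∧
      (∀ ω ∈ Set.Icc (-Ω) Ω,
        ‖(∑ j, (b j : ℂ) * Complex.exp (Complex.I * (yh j : ℝ) * (ω : ℝ)))
          - ∑ j, (a j : ℂ) * Complex.exp (Complex.I * (y j : ℝ) * (ω : ℝ))‖ < σ) ∧
      IsLeast (Set.range a) mmin ∧
      (∀ p j, p ≠ j →
        2 * (Real.exp 1)⁻¹ / Ω * (σ / mmin) ^ ((1 : ℝ) / (2 * (n : ℝ) - 2)) ≤ |y p - y j|) ∧
      (∃ p j, p ≠ j ∧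
        |y p - y j| = 2 * (Real.exp 1)⁻¹ / Ω * (σ / mmin) ^ ((1 : ℝ) / (2 * (n : ℝ) - 2))) := by
  obtain ⟨m, rfl⟩ : ∃ m, n = m + 1 := ⟨n - 1, by omega⟩
  have hmmin : 0 < mmin := hσ.trans_le hσm
  have hexp : (1 : ℝ) / (2 * ((m + 1 : ℕ) : ℝ) - 2) = ((2 * m : ℕ) : ℝ)⁻¹ := by push_cast; ring
  set t := (σ / mmin) ^ ((1 : ℝ) / (2 * ((m + 1 : ℕ) : ℝ) - 2)) with ht
  have ht_pow : t ^ (2 * m) = σ / mmin := by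
    rw [ht, hexp]; exact Real.rpow_inv_natCast_pow (by positivity) (by omega)
  have ht_le : t ≤ 1 :=
    Real.rpow_le_one (by positivity) ((div_le_one hmmin).2 hσm) (by rw [hexp]; positivity)
  set h := (Real.exp 1)⁻¹ / Ω * t with hh
  have he : (Real.exp 1)⁻¹ < 1 := inv_lt_one_of_one_lt₀ (one_lt_exp_iff.2 one_pos)
  have hI : (m : ℝ) * h ≤ (((m + 1 : ℕ) : ℝ) - 1) * π / (2 * Ω) :=
    calc (m : ℝ) * h ≤ m * ((Real.exp 1)⁻¹ / Ω) := by
          gcongr; exact mul_le_of_le_one_right (by positivity) ht_le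
      _ ≤ m * (π / 2 / Ω) := by gcongr; linarith [pi_gt_three]
      _ = (((m + 1 : ℕ) : ℝ) - 1) * π / (2 * Ω) := by push_cast; ring
  have hsep : 2 * (Real.exp 1)⁻¹ / Ω * t = 2 * h := by ring
  obtain ⟨a, y, b, yh, ha, hy, hyI, hb, hyh, hF, hmin, hy_sep, hy_sep'⟩ :=
    exists_binomial_pair (by omega : 1 ≤ m) hmmin (by positivity : 0 < h) Ω
  refine ⟨a, y, b, yh, ha, hy, fun j => Set.Icc_subset_Icc (neg_le_neg hI) hI (hyI j), hb, hyh,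
    fun ω hω => (hF ω hω).trans_lt ?_, hmin, hsep ▸ hy_sep, hsep ▸ hy_sep'⟩
  calc mmin * (h * Ω) ^ (2 * m) = mmin * (t * (Real.exp 1)⁻¹) ^ (2 * m) := by
        rw [hh]; field_simp
    _ = σ * (Real.exp 1)⁻¹ ^ (2 * m) := by rw [mul_pow, ht_pow]; field_simp
    _ < σ := mul_lt_of_lt_one_right hσ (pow_lt_one₀ (by positivity) he (by omega))
end

section
/- Let Ω > 0, let n ≥ 2 be an integer, let 0 < σ ≤ m_min, and set τ = (e^{−1}/Ω)·(σ/m_min)^{1/(2n−1)}. Then there exist a positive discrete measure μ = Σ_{j=1}^n a_j δ_{y_j} with a_j > 0 whose support points are exactly the n points {−(n−1/2)τ + 2(j−1)τ : j = 1,…,n} = {−(n−1/2)τ, −(n−5/2)τ, …, (n−3/2)τ}, and a positive discrete measure μ̂ = Σ_{j=1}^n â_j δ_{ŷ_j} with â_j > 0 whose support points are exactly the n points {−(n−3/2)τ + 2(j−1)τ : j = 1,…,n} = {−(n−3/2)τ, −(n−7/2)τ, …, (n−1/2)τ}, such that sup_{ω∈[−Ω,Ω]} |Fμ̂(ω) −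 Fμ(ω)| < σ and min_{1≤j≤n} a_j = m_min. -/
/-!
Put the weights `m_min · C(2n-1, k)` on the grid points `(k - n + 1/2)τ`, `k = 0, …, 2n-1`,
giving the even `k` to `μ` and the odd `k` to `μ̂`. By the binomial theorem, `Fμ̂ - Fμ` is then
`-m_min e^{i(1/2-n)τω} (1 - e^{iτω})^{2n-1}`, a full `(2n-1)`-st finite difference, so on `[-Ω, Ω]`
it is at most `m_min (τΩ)^{2n-1} = e^{-(2n-1)} σ < σ`.
-/

open Real Complex Finset

theorem Finset.sum_range_two_mul {M : Type*} [AddCommMonoid M] (f : ℕ → M) (n : ℕ) :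
    ∑ k ∈ range (2 * n), f k = ∑ j ∈ range n, (f (2 * j) + f (2 * j + 1)) := by
  induction n with
  | zero => simp
  | succ n ih => rw [Nat.mul_succ, sum_range_succ, sum_range_succ, sum_range_succ, ih, add_assoc]

theorem odd_choose_sum_sub_even_choose_sum {R : Type*} [CommRing R] (q : R) {n : ℕ} (hn : n ≠ 0) :
    ∑ j ∈ range n, ((2 * n - 1).choose (2 * j + 1) : R) * q ^ (2 * j + 1)
      - ∑ j ∈ range n, ((2 * n - 1).choose (2 * j) : R) * q ^ (2 * j) = -(1 - q) ^ (2 * n - 1) := by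
  have h := add_pow (-q) 1 (2 * n - 1)
  rw [Nat.sub_add_cancel (by omega), sum_range_two_mul] at h
  simp only [one_pow, mul_one, Even.neg_pow (even_two_mul _), Odd.neg_pow (odd_two_mul_add_one _)] at h
  rw [neg_add_eq_sub] at h
  rw [h, ← sum_sub_distrib, ← sum_neg_distrib]
  exact sum_congr rfl fun j _ => by ring

theorem exp_I_mul_grid (x₀ τ ω : ℝ) (k : ℕ) :
    Complex.exp (I * ↑((x₀ + k) * τ) * ↑ω)
      = Complex.exp (I * ↑(x₀ * τ) * ↑ω) * Complex.exp (I * ↑(τ * ω)) ^ k := by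
  rw [← Complex.exp_nat_mul, ← Complex.exp_add]
  congr 1
  push_cast
  ring

theorem fourier_sub_eq_binomial {n : ℕ} (hn : n ≠ 0) (m τ ω : ℝ) :
    (∑ j : Fin n, ((m * (2 * n - 1).choose (2 * (j : ℕ) + 1) : ℝ) : ℂ) *
        Complex.exp (I * ↑((-(n : ℝ) + 3 / 2 + 2 * (j : ℝ)) * τ) * ↑ω))
      - ∑ j : Fin n, ((m * (2 * n - 1).choose (2 * (j : ℕ)) : ℝ) : ℂ) *
        Complex.exp (I * ↑((-(n : ℝ) + 1 / 2 + 2 * (j : ℝ)) * τ) * ↑ω)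
    = -m * Complex.exp (I * ↑((-(n : ℝ) + 1 / 2) * τ) * ↑ω)
        * (1 - Complex.exp (I * ↑(τ * ω))) ^ (2 * n - 1) := by
  set x₀ : ℝ := -(n : ℝ) + 1 / 2
  have hodd (j : ℕ) : (-(n : ℝ) + 3 / 2 + 2 * j) * τ = (x₀ + ↑(2 * j + 1)) * τ := by
    push_cast; ring
  have heven (j : ℕ) : (x₀ + 2 * j) * τ = (x₀ + ↑(2 * j)) * τ := by
    push_cast; ring
  simp only [hodd, heven, exp_I_mul_grid]
  rw [Fin.sum_univ_eq_sum_range (fun j => ((m * (2 * n - 1).choose (2 * j + 1) : ℝ) : ℂ) *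
      (Complex.exp (I * ↑(x₀ * τ) * ↑ω) * Complex.exp (I * ↑(τ * ω)) ^ (2 * j + 1))),
    Fin.sum_univ_eq_sum_range (fun j => ((m * (2 * n - 1).choose (2 * j) : ℝ) : ℂ) *
      (Complex.exp (I * ↑(x₀ * τ) * ↑ω) * Complex.exp (I * ↑(τ * ω)) ^ (2 * j))),
    neg_mul, neg_mul, ← mul_neg, ← odd_choose_sum_sub_even_choose_sum _ hn, mul_sub, mul_sum, mul_sum]
  congr 1 <;> exact sum_congr rfl fun j _ => by push_cast; ring

theorem norm_mul_exp_mul_one_sub_exp_pow_le {m : ℝ} (hm : 0 ≤ m) (x θ ω : ℝ) (k : ℕ) :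
    ‖-m * Complex.exp (I * ↑x * ↑ω) * (1 - Complex.exp (I * ↑θ)) ^ k‖ ≤ m * |θ| ^ k := by
  rw [norm_mul, norm_mul, norm_neg, norm_real, norm_of_nonneg hm, norm_pow, norm_sub_rev,
    mul_assoc I, ← ofReal_mul, norm_exp_I_mul_ofReal, mul_one]
  gcongr
  exact norm_exp_I_mul_ofReal_sub_one_le

theorem mul_inv_exp_mul_rpow_inv_pow_lt {σ m : ℝ} (hσ : 0 < σ) (hm : 0 < m) {k : ℕ} (hk : k ≠ 0) :
    m * ((Real.exp 1)⁻¹ * (σ / m) ^ (k : ℝ)⁻¹) ^ k < σ := by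
  have he : (Real.exp 1)⁻¹ ^ k < 1 :=
    pow_lt_one₀ (by positivity) (inv_lt_one_of_one_lt₀ (one_lt_exp_iff.2 one_pos)) hk
  calc m * ((Real.exp 1)⁻¹ * (σ / m) ^ (k : ℝ)⁻¹) ^ k
      = (Real.exp 1)⁻¹ ^ k * σ := by
        rw [mul_pow, Real.rpow_inv_natCast_pow (by positivity) hk]; field_simp
    _ < σ := mul_lt_of_lt_one_left hσ he

theorem isLeast_range_mul_choose {n : ℕ} (hn : n ≠ 0) {m : ℝ} (hm : 0 ≤ m) :
    IsLeast (Set.range fun j : Fin n => m * (2 * n - 1).choose (2 * (j : ℕ))) m := by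
  refine ⟨⟨⟨0, Nat.pos_of_ne_zero hn⟩, by simp⟩, ?_⟩
  rintro _ ⟨j, rfl⟩
  exact le_mul_of_one_le_right hm (Nat.one_le_cast.2 (Nat.choose_pos (by omega)))

/-- lower bound for the computational resolution limit to support recovery
(Theorem `thm:supportlowerboundthm0`). With `τ = (e⁻¹/Ω)(σ/m_min)^{1/(2n-1)}`, there are two
positive measures with `n` supports each, located at the interleaved grids
`{-(n-1/2)τ + 2(j-1)τ}` and `{-(n-3/2)τ + 2(j-1)τ}`, whose Fourier data on `[-Ω,Ω]` differ by
less than `σ`, and whose minimal amplitude is `m_min`. -/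
theorem support_recovery_lower_bound
    (Ω σ mmin : ℝ) (hΩ : 0 < Ω) (n : ℕ) (hn : 2 ≤ n)
    (hσ : 0 < σ) (hσm : σ ≤ mmin)
    (τ : ℝ) (hτ : τ = (Real.exp 1)⁻¹ / Ω * (σ / mmin) ^ ((1 : ℝ) / (2 * (n : ℝ) - 1))) :
    ∃ a b : Fin n → ℝ,
      (∀ j, 0 < a j) ∧ (∀ j, 0 < b j) ∧
      (∀ ω ∈ Set.Icc (-Ω) Ω,
        Norm.norm
          ((∑ j, (b j : ℂ) *
              Complex.exp (Complex.I * (((-(n : ℝ) + 3 / 2 + 2 * (j : ℝ)) * τ : ℝ)) * (ω : ℝ)))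
            - ∑ j, (a j : ℂ) *
              Complex.exp (Complex.I * (((-(n : ℝ) + 1 / 2 + 2 * (j : ℝ)) * τ : ℝ)) * (ω : ℝ)))
          < σ) ∧
      IsLeast (Set.range a) mmin := by
  have hm : 0 < mmin := hσ.trans_le hσm
  have hn0 : n ≠ 0 := by omega
  have hτ_pos : 0 < τ := hτ ▸ by positivity
  have hexp : (1 : ℝ) / (2 * (n : ℝ) - 1) = ((2 * n - 1 : ℕ) : ℝ)⁻¹ := by
    rw [Nat.cast_sub (by omega), one_div]; push_cast; rfl
  refine ⟨fun j => mmin * (2 * n - 1).choose (2 * (j : ℕ)),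
    fun j => mmin * (2 * n - 1).choose (2 * (j : ℕ) + 1),
    fun j => mul_pos hm (Nat.cast_pos.2 (Nat.choose_pos (by omega))),
    fun j => mul_pos hm (Nat.cast_pos.2 (Nat.choose_pos (by omega))),
    fun ω hω => ?_, isLeast_range_mul_choose hn0 hm.le⟩
  rw [fourier_sub_eq_binomial hn0]
  calc _ ≤ mmin * |τ * ω| ^ (2 * n - 1) := norm_mul_exp_mul_one_sub_exp_pow_le hm.le _ _ _ _
    _ ≤ mmin * (τ * Ω) ^ (2 * n - 1) := by
        gcongr
        rw [abs_mul, abs_of_pos hτ_pos]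
        exact mul_le_mul_of_nonneg_left (abs_le.2 hω) hτ_pos.le
    _ = mmin * ((Real.exp 1)⁻¹ * (σ / mmin) ^ ((2 * n - 1 : ℕ) : ℝ)⁻¹) ^ (2 * n - 1) := by
        rw [hτ, hexp]; field_simp
    _ < σ := mul_inv_exp_mul_rpow_inv_pow_lt hσ hm (by omega)
end

section
/- Let k ≥ 1 and n ≥ 2 be integers. There exists a constant C_num(k,n) > 0, depending only on k and n, with the following property: for all Ω > 0 and σ > 0, for every positive discrete measure μ = Σ_{j=1}^n a_j δ_{y_j} with a_j > 0 and distinct points y_j ∈ ℝ^k satisfying ‖y_j‖₂ < (n−1)π/(2Ω), with m_min = min_j a_j, if min_{p≠j} ‖y_p − y_j‖₂ ≥ (C_num(k,n)/Ω)·(σ/m_min)^{1/(2n−2)}, then for every function W on the ball {ω ∈ ℝ^k : ‖ω‖₂ ≤ Ω} with sup_{‖ω‖₂≤Ω} |W(ω)| < σ and measurement Y(ω) = Fμ(ω) + W(ω), every discrete measure μ̂ = Σ_{j=1}^m â_j δ_{ŷ_j} with m < n, â_j > 0 and distinct ŷ_j ∈ ℝ^k satisfies sup_{‖ω‖₂≤Ω}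 |Fμ̂(ω) − Y(ω)| ≥ σ. -/
/-!
Suppose a positive measure `μ̂` with `m < n` atoms fitted the data to within `σ`. Then
`Fμ - Fμ̂` is smaller than `2σ` on the ball `‖ω‖ ≤ Ω`. By pigeonhole some source `y_j` is at
distance at least half the separation from every `ŷ_l`. The test function
`φ x = ∏_l sin² ⟪x - ŷ_l, v_l⟫`, with `‖v_l‖ ≤ Ω / (2(n - 1))` and `⟪y_j - ŷ_l, v_l⟫` as large as
possible up to `π/2`, is the Fourier transform of a discrete measure of total variation `1`
supported in that ball; it vanishes at every `ŷ_l` and `φ y_j ≥ (2t)^(2(n-1))` with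
`t = (σ / m_min)^(1/(2n-2))`. Pairing `μ - μ̂` against `φ` gives
`4^(n-1) σ ≤ m_min φ y_j ≤ ⟨μ - μ̂, φ⟩ ≤ 2σ`, a contradiction. This works with `C_num = 16(n - 1)`.
-/

open Real Complex Finset
open scoped RealInnerProductSpace

variable {E : Type*} [NormedAddCommGroup E] [InnerProductSpace ℝ E]

noncomputable def diracSumFourier {ι : Type*} [Fintype ι] (a : ι → ℂ) (y : ι → E) (ω : E) : ℂ :=
  ∑ j, a j * Complex.exp (I * (⟪y j, ω⟫ : ℝ))

theorem sum_mul_diracSumFourier_comm {ι κ : Type*} [Fintype ι] [Fintype κ]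
    (a : ι → ℂ) (y : ι → E) (c : κ → ℂ) (ν : κ → E) :
    ∑ j, a j * diracSumFourier c ν (y j) = ∑ i, c i * diracSumFourier a y (ν i) := by
  simp only [diracSumFourier, Finset.mul_sum, real_inner_comm (y _) (ν _)]
  rw [Finset.sum_comm]
  exact Finset.sum_congr rfl fun _ _ => Finset.sum_congr rfl fun _ _ => by ring

/-- `f` is the Fourier transform of a discrete measure supported in the closed ball of radius `Ω`
with total variation at most `L`. -/
def HasTrigExpansion (Ω L : ℝ) (f : E → ℂ) : Prop :=
  ∃ (ι : Type) (_ : Fintype ι) (c : ι → ℂ) (ν : ι → E),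
    (∀ i, ‖ν i‖ ≤ Ω) ∧ ∑ i, ‖c i‖ ≤ L ∧ f = diracSumFourier c ν

namespace HasTrigExpansion

theorem mono {Ω Ω' L L' : ℝ} {f : E → ℂ} (hf : HasTrigExpansion Ω L f) (hΩ : Ω ≤ Ω')
    (hL : L ≤ L') : HasTrigExpansion Ω' L' f := by
  obtain ⟨ι, _, c, ν, hν, hc, rfl⟩ := hf
  exact ⟨ι, inferInstance, c, ν, fun i => (hν i).trans hΩ, hc.trans hL, rfl⟩

theorem one : HasTrigExpansion (E := E) 0 1 1 :=
  ⟨Unit, inferInstance, 1, 0, fun _ => by simp, by simp, by ext; simp [diracSumFourier]⟩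

theorem mul {Ω₁ Ω₂ L₁ L₂ : ℝ} {f g : E → ℂ} (hf : HasTrigExpansion Ω₁ L₁ f)
    (hg : HasTrigExpansion Ω₂ L₂ g) : HasTrigExpansion (Ω₁ + Ω₂) (L₁ * L₂) (f * g) := by
  obtain ⟨ι, _, c, ν, hν, hc, rfl⟩ := hf
  obtain ⟨κ, _, d, μ, hμ, hd, rfl⟩ := hg
  refine ⟨ι × κ, inferInstance, fun p => c p.1 * d p.2, fun p => ν p.1 + μ p.2,
    fun p => (norm_add_le _ _).trans (add_le_add (hν _) (hμ _)), ?_, ?_⟩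
  · simp only [norm_mul, Fintype.sum_prod_type, ← Finset.mul_sum, ← Finset.sum_mul]
    exact mul_le_mul hc hd (Finset.sum_nonneg fun _ _ => norm_nonneg _)
      ((Finset.sum_nonneg fun _ _ => norm_nonneg _).trans hc)
  · ext x
    simp only [Pi.mul_apply, diracSumFourier, Fintype.sum_prod_type, Finset.sum_mul_sum,
      inner_add_left, Complex.ofReal_add, mul_add, Complex.exp_add]
    exact Finset.sum_congr rfl fun _ _ => Finset.sum_congr rfl fun _ _ => by ring

theorem prod {α : Type*} (s : Finset α) {Ω L : α → ℝ} {f : α → E → ℂ}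
    (h : ∀ l ∈ s, HasTrigExpansion (Ω l) (L l) (f l)) :
    HasTrigExpansion (∑ l ∈ s, Ω l) (∏ l ∈ s, L l) (∏ l ∈ s, f l) := by
  classical
  induction s using Finset.induction_on with
  | empty => simpa using one
  | insert l s hl ih =>
    rw [Finset.sum_insert hl, Finset.prod_insert hl, Finset.prod_insert hl]
    exact (h l (Finset.mem_insert_self l s)).mul
      (ih fun l' hl' => h l' (Finset.mem_insert_of_mem hl'))

theorem norm_sum_sub_sum_le {ι κ : Type*} [Fintype ι] [Fintype κ] {Ω L B : ℝ} {f : E → ℂ}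
    (hf : HasTrigExpansion Ω L f) (a : ι → ℂ) (y : ι → E) (b : κ → ℂ) (z : κ → E)
    (hB0 : 0 ≤ B) (hB : ∀ ω, ‖ω‖ ≤ Ω → ‖diracSumFourier a y ω - diracSumFourier b z ω‖ ≤ B) :
    ‖∑ j, a j * f (y j) - ∑ l, b l * f (z l)‖ ≤ L * B := by
  obtain ⟨ι', _, c, ν, hν, hc, rfl⟩ := hf
  rw [sum_mul_diracSumFourier_comm a, sum_mul_diracSumFourier_comm b, ← Finset.sum_sub_distrib]
  calc ‖∑ i, (c i * diracSumFourier a y (ν i) - c i * diracSumFourier b z (ν i))‖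
      ≤ ∑ i, ‖c i‖ * B := by
        refine (norm_sum_le _ _).trans (Finset.sum_le_sum fun i _ => ?_)
        rw [← mul_sub, norm_mul]
        exact mul_le_mul_of_nonneg_left (hB _ (hν i)) (norm_nonneg _)
    _ ≤ L * B := by rw [← Finset.sum_mul]; exact mul_le_mul_of_nonneg_right hc hB0

end HasTrigExpansion

-- Written term by term as the Fourier transform of `½ δ₀ - ¼ e^{-2it} δ_{2} - ¼ e^{2it} δ_{-2}` at `s`.
theorem ofReal_sin_sub_sq (s t : ℝ) :
    ((Real.sin (s - t) ^ 2 : ℝ) : ℂ) = 1 / 2 * Complex.exp (I * (0 : ℝ))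
      + -Complex.exp (I * (-(2 * t) : ℝ)) / 4 * Complex.exp (I * (2 * s : ℝ))
      + -Complex.exp (I * (2 * t : ℝ)) / 4 * Complex.exp (I * (-(2 * s) : ℝ)) := by
  set e : ℂ := Complex.exp (((s - t : ℝ) : ℂ) * I)
  set e' : ℂ := Complex.exp (-((s - t : ℝ) : ℂ) * I)
  have h₁ : Complex.exp (I * (-(2 * t) : ℝ)) * Complex.exp (I * (2 * s : ℝ)) = e ^ 2 := by
    rw [← Complex.exp_add, ← Complex.exp_nat_mul]; push_cast; ring_nf
  have h₂ : Complex.exp (I * (2 * t : ℝ)) * Complex.exp (I * (-(2 * s) : ℝ)) = e' ^ 2 := by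
    rw [← Complex.exp_add, ← Complex.exp_nat_mul]; push_cast; ring_nf
  have h₃ : e' * e = 1 := by rw [← Complex.exp_add, neg_mul, neg_add_cancel, Complex.exp_zero]
  rw [Complex.ofReal_pow, Complex.ofReal_sin, Complex.sin, Complex.ofReal_zero, mul_zero,
    Complex.exp_zero]
  linear_combination (1 / 4 : ℂ) * h₁ + (1 / 4 : ℂ) * h₂ + (1 / 2 : ℂ) * h₃ + (e' - e) ^ 2 / 4 * I_sq

theorem hasTrigExpansion_sin_sq (p v : E) :
    HasTrigExpansion (2 * ‖v‖) 1 fun x => ((Real.sin ⟪x - p, v⟫ ^ 2 : ℝ) : ℂ) := by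
  refine ⟨Fin 3, inferInstance,
    ![1 / 2, -Complex.exp (I * (-(2 * ⟪p, v⟫) : ℝ)) / 4, -Complex.exp (I * (2 * ⟪p, v⟫ : ℝ)) / 4],
    ![0, (2 : ℝ) • v, -((2 : ℝ) • v)], ?_, ?_, ?_⟩
  · intro i
    fin_cases i <;> simp [norm_smul]
  · simp only [Fin.sum_univ_three, Matrix.cons_val_zero, Matrix.cons_val_one, Matrix.cons_val_two,
      Matrix.head_cons, Matrix.tail_cons, norm_div, norm_neg, Complex.norm_exp_I_mul_ofReal]
    norm_num
  · ext x
    simp only [diracSumFourier, Fin.sum_univ_three, Matrix.cons_val_zero, Matrix.cons_val_one,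
      Matrix.cons_val_two, Matrix.head_cons, Matrix.tail_cons, inner_zero_left, inner_neg_left,
      real_inner_smul_left, real_inner_comm x v, inner_sub_left]
    exact ofReal_sin_sub_sq _ _

theorem exists_norm_le_inner_eq_min (w : E) {β : ℝ} (hβ : 0 ≤ β) :
    ∃ v : E, ‖v‖ ≤ β ∧ ⟪w, v⟫ = min (β * ‖w‖) (π / 2) := by
  rcases eq_or_ne w 0 with rfl | hw
  · exact ⟨0, by simpa using hβ, by simp; positivity⟩
  have hw' : 0 < ‖w‖ := norm_pos_iff.2 hw
  refine ⟨(min (β * ‖w‖) (π / 2) / ‖w‖ ^ 2) • w, ?_, ?_⟩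
  · rw [norm_smul, Real.norm_eq_abs, abs_of_nonneg (by positivity), sq, div_mul_eq_div_div,
      div_mul_cancel₀ _ hw'.ne', div_le_iff₀ hw']
    exact min_le_left _ _
  · rw [real_inner_smul_right, real_inner_self_eq_norm_sq, div_mul_cancel₀ _ (by positivity)]

theorem two_mul_le_sin_min {t u : ℝ} (ht : 0 ≤ t) (ht' : t ≤ 1 / 2) (hu : 4 * t ≤ u) :
    2 * t ≤ Real.sin (min u (π / 2)) := by
  rcases min_cases u (π / 2) with ⟨h, hle⟩ | ⟨h, -⟩
  · rw [h]
    calc 2 * t ≤ 2 / π * u := by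
          rw [div_mul_eq_mul_div, le_div_iff₀ pi_pos]; nlinarith [pi_le_four]
      _ ≤ Real.sin u := mul_le_sin (by linarith) hle
  · rw [h, Real.sin_pi_div_two]; linarith

theorem exists_forall_le_dist_of_card_lt {X ι κ : Type*} [PseudoMetricSpace X] [Fintype ι]
    [Fintype κ] (hcard : Fintype.card κ < Fintype.card ι) {y : ι → X} (z : κ → X) {δ : ℝ}
    (hy : ∀ i j, i ≠ j → δ ≤ dist (y i) (y j)) : ∃ i, ∀ l, δ / 2 ≤ dist (y i) (z l) := by
  by_contra! h
  choose f hf using h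
  obtain ⟨i, j, hij, hfij⟩ := Fintype.exists_ne_map_eq_of_card_lt f hcard
  have hi := hf i
  rw [hfij] at hi
  linarith [hy i j hij, hf j, dist_triangle_right (y i) (y j) (z (f j))]

theorem mul_prod_sin_sq_le_of_norm_diracSumFourier_sub_le {ι κ : Type*} [Fintype ι] [Fintype κ]
    {a : ι → ℝ} (ha : ∀ i, 0 ≤ a i) (y : ι → E) (b : κ → ℂ) (z : κ → E) {β Ω B : ℝ}
    (hβ : 0 ≤ β) (hβΩ : 2 * Fintype.card κ * β ≤ Ω)
    (hB : ∀ ω, ‖ω‖ ≤ Ω → ‖diracSumFourier (fun i => (a i : ℂ)) y ω - diracSumFourier b z ω‖ ≤ B)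
    (j : ι) : a j * ∏ l, Real.sin (min (β * ‖y j - z l‖) (π / 2)) ^ 2 ≤ B := by
  choose v hv hvy using fun l => exists_norm_le_inner_eq_min (y j - z l) hβ
  set φ : E → ℝ := fun x => ∏ l, Real.sin ⟪x - z l, v l⟫ ^ 2 with hφ_def
  have hφ : HasTrigExpansion Ω 1 fun x => (φ x : ℂ) := by
    have hprod := HasTrigExpansion.prod Finset.univ fun l _ => hasTrigExpansion_sin_sq (z l) (v l)
    have hfun : (∏ l, fun x => ((Real.sin ⟪x - z l, v l⟫ ^ 2 : ℝ) : ℂ)) = fun x => (φ x : ℂ) := by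
      ext x; simp [hφ_def, Finset.prod_apply]
    refine hfun ▸ hprod.mono ?_ (by simp)
    calc ∑ l, 2 * ‖v l‖ ≤ ∑ _l : κ, 2 * β := Finset.sum_le_sum fun l _ => by linarith [hv l]
      _ = 2 * Fintype.card κ * β := by simp [Finset.card_univ]; ring
      _ ≤ Ω := hβΩ
  have hB0 : 0 ≤ B := (norm_nonneg _).trans <| hB 0 <| by
    simpa using (by positivity : (0 : ℝ) ≤ 2 * Fintype.card κ * β).trans hβΩ
  have hpair := hφ.norm_sum_sub_sum_le (fun i => (a i : ℂ)) y b z hB0 hB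
  have hφz : ∀ l, φ (z l) = 0 := fun l => Finset.prod_eq_zero (Finset.mem_univ l) (by simp)
  have hφy : φ (y j) = ∏ l, Real.sin (min (β * ‖y j - z l‖) (π / 2)) ^ 2 := by simp [hφ_def, hvy]
  have hφ0 : ∀ x, 0 ≤ φ x := fun x => Finset.prod_nonneg fun l _ => sq_nonneg _
  simp only [hφz, Complex.ofReal_zero, mul_zero, Finset.sum_const_zero, sub_zero, one_mul] at hpair
  rw [← hφy]
  calc a j * φ (y j) ≤ ∑ i, a i * φ (y i) :=
        Finset.single_le_sum (fun i _ => mul_nonneg (ha i) (hφ0 _)) (Finset.mem_univ j)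
    _ ≤ ‖((∑ i, a i * φ (y i) : ℝ) : ℂ)‖ := by rw [Complex.norm_real]; exact le_abs_self _
    _ ≤ B := by push_cast; exact hpair

theorem pow_two_mul_le_prod_sq {κ : Type*} [Fintype κ] {r : ℝ} {s : κ → ℝ} {N : ℕ} (hr : 0 ≤ r)
    (hr₁ : r ≤ 1) (hN : Fintype.card κ ≤ N) (hs : ∀ l, r ≤ s l) : r ^ (2 * N) ≤ ∏ l, s l ^ 2 :=
  calc r ^ (2 * N) ≤ r ^ (2 * Fintype.card κ) := pow_le_pow_of_le_one hr hr₁ (by omega)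
    _ = ∏ _l : κ, r ^ 2 := by rw [Finset.prod_const, Finset.card_univ, pow_mul]
    _ ≤ ∏ l, s l ^ 2 := Finset.prod_le_prod (fun _ _ => by positivity)
        fun l _ => pow_le_pow_left₀ hr (hs l) 2

theorem rpow_one_div_two_mul_sub_two_pow {x : ℝ} (hx : 0 ≤ x) {n : ℕ} (hn : 2 ≤ n) :
    (x ^ ((1 : ℝ) / (2 * n - 2))) ^ (2 * (n - 1)) = x := by
  have h : ((2 * (n - 1) : ℕ) : ℝ) = 2 * n - 2 := by
    push_cast [Nat.cast_sub (by omega : 1 ≤ n)]; ring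
  rw [one_div, ← h]
  exact rpow_inv_natCast_pow hx (by omega)

theorem mul_pow_le_of_norm_diracSumFourier_sub_le {ι κ : Type*} [Fintype ι] [Fintype κ] {N : ℕ}
    (hN : 0 < N) (hκN : Fintype.card κ ≤ N) (hκι : Fintype.card κ < Fintype.card ι)
    {a : ι → ℝ} {mmin : ℝ} (hmmin : 0 ≤ mmin) (ha : ∀ i, mmin ≤ a i) {y : ι → E} (b : κ → ℂ)
    (z : κ → E) {t Ω B : ℝ} (ht : 0 ≤ t) (ht' : t ≤ 1 / 2) (hΩ : 0 < Ω)
    (hy : ∀ i j, i ≠ j → 16 * N / Ω * t ≤ ‖y i - y j‖)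
    (hB : ∀ ω, ‖ω‖ ≤ Ω → ‖diracSumFourier (fun i => (a i : ℂ)) y ω - diracSumFourier b z ω‖ ≤ B) :
    mmin * (2 * t) ^ (2 * N) ≤ B := by
  obtain ⟨j, hj⟩ := exists_forall_le_dist_of_card_lt hκι z (δ := 16 * N / Ω * t)
    fun p q hpq => by rw [dist_eq_norm]; exact hy p q hpq
  set β := Ω / (2 * N) with hβ
  have hβΩ : 2 * Fintype.card κ * β ≤ Ω :=
    calc 2 * Fintype.card κ * β ≤ 2 * N * β := by gcongr
      _ = Ω := by rw [hβ]; field_simp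
  have hfar : ∀ l, 4 * t ≤ β * ‖y j - z l‖ := fun l =>
    calc 4 * t = β * (16 * N / Ω * t / 2) := by rw [hβ]; field_simp; ring
      _ ≤ β * ‖y j - z l‖ := by gcongr; rw [← dist_eq_norm]; exact hj l
  calc mmin * (2 * t) ^ (2 * N) ≤ a j * ∏ l, Real.sin (min (β * ‖y j - z l‖) (π / 2)) ^ 2 :=
        mul_le_mul (ha j) (pow_two_mul_le_prod_sq (by positivity) (by linarith) hκN
          fun l => two_mul_le_sin_min ht ht' (hfar l)) (by positivity) (hmmin.trans (ha j))
    _ ≤ B := mul_prod_sin_sq_le_of_norm_diracSumFourier_sub_le (fun i => hmmin.trans (ha i)) y b z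
        (by positivity) hβΩ hB j

theorem norm_sub_lt_of_norm_sub_add_lt {G : Type*} [SeminormedAddCommGroup G] {x y w : G}
    {σ : ℝ} (hfit : ‖y - (x + w)‖ < σ) (hw : ‖w‖ < σ) : ‖x - y‖ < 2 * σ :=
  calc ‖x - y‖ = ‖(y - (x + w)) + w‖ := by rw [← norm_neg]; congr 1; abel
    _ < σ + σ := (norm_add_le _ _).trans_lt (add_lt_add hfit hw)
    _ = 2 * σ := by ring

theorem number_detection_upper_bound_multid_general
    (k n : ℕ) (hn : 2 ≤ n) :
    ∃ C : ℝ, 0 < C ∧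
      ∀ (Ω σ : ℝ), 0 < Ω → 0 < σ →
      ∀ (a : Fin n → ℝ) (y : Fin n → EuclideanSpace ℝ (Fin k)),
        (∀ j, 0 < a j) → Function.Injective y →
        (∀ j, ‖y j‖ < ((n : ℝ) - 1) * π / (2 * Ω)) →
        ∀ mmin : ℝ, IsLeast (Set.range a) mmin →
        (∀ p j, p ≠ j → C / Ω * (σ / mmin) ^ ((1 : ℝ) / (2 * (n : ℝ) - 2)) ≤ ‖y p - y j‖) →
        ∀ W : EuclideanSpace ℝ (Fin k) → ℂ,
          (∀ ω, ‖ω‖ ≤ Ω → ‖W ω‖ < σ) →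
        ∀ (m : ℕ), m < n →
        ∀ (b : Fin m → ℝ) (yh : Fin m → EuclideanSpace ℝ (Fin k)),
          (∀ j, 0 < b j) → Function.Injective yh →
          ∃ ω : EuclideanSpace ℝ (Fin k), ‖ω‖ ≤ Ω ∧
            σ ≤ ‖
              ((∑ j, (b j : ℂ) * Complex.exp (Complex.I * (⟪yh j, ω⟫ : ℝ)))
                - ((∑ j, (a j : ℂ) * Complex.exp (Complex.I * (⟪y j, ω⟫ : ℝ))) + W ω))‖ := by
  have hn₁ : (1 : ℝ) ≤ n - 1 := by
    have : (2 : ℝ) ≤ n := by exact_mod_cast hn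
    linarith
  refine ⟨16 * (n - 1), by linarith, ?_⟩
  intro Ω σ hΩ hσ a y ha _ hy mmin ⟨⟨j₀, hj₀⟩, hmin⟩ hsep W hW m hm b yh _ _
  by_contra! hfit
  have hmmin : 0 < mmin := hj₀ ▸ ha j₀
  set t := (σ / mmin) ^ ((1 : ℝ) / (2 * n - 2))
  have ht : 0 < t := by positivity
  -- two sources in the ball of radius `(n - 1)π / (2Ω)` are less than `(n - 1)π / Ω` apart
  have ht_half : t ≤ 1 / 2 := by
    have h01 := hsep ⟨0, by omega⟩ ⟨1, by omega⟩ (by simp [Fin.ext_iff])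
    have := norm_sub_le (y ⟨0, by omega⟩) (y ⟨1, by omega⟩)
    have := hy ⟨0, by omega⟩
    have := hy ⟨1, by omega⟩
    have hlt : (n - 1) / Ω * (16 * t) < (n - 1) / Ω * π :=
      calc _ = 16 * (n - 1) / Ω * t := by ring
        _ < 2 * ((n - 1) * π / (2 * Ω)) := by linarith
        _ = _ := by field_simp
    linarith [lt_of_mul_lt_mul_left hlt (by positivity), pi_lt_four]
  have hN : ((n - 1 : ℕ) : ℝ) = n - 1 := by push_cast [Nat.cast_sub (by omega : 1 ≤ n)]; ring
  have hbound := mul_pow_le_of_norm_diracSumFourier_sub_le (N := n - 1) (by omega)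
    (by simp only [Fintype.card_fin]; omega) (by simpa using hm) hmmin.le (fun i => hmin ⟨i, rfl⟩)
    (fun l => (b l : ℂ)) yh ht.le ht_half hΩ (by rw [hN]; exact hsep)
    fun ω hω => (norm_sub_lt_of_norm_sub_add_lt (hfit ω hω) (hW ω hω)).le
  have h4 : (4 : ℝ) ≤ 2 ^ (2 * (n - 1)) :=
    calc (4 : ℝ) = 2 ^ 2 := by norm_num
      _ ≤ _ := pow_le_pow_right₀ (by norm_num) (by omega)
  rw [mul_pow, rpow_one_div_two_mul_sub_two_pow (by positivity) hn, mul_left_comm,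
    mul_div_cancel₀ _ hmmin.ne'] at hbound
  nlinarith

/-- Theorem `thm:highdupperboundnumberlimit0`: upper bound for the computational
resolution limit to number detection in `k` dimensions. There is a constant `C_num(k,n) > 0`
such that whenever the `n` positive sources in `B_{(n-1)π/(2Ω)}(0) ⊂ ℝᵏ` are separated by at
least `(C_num(k,n)/Ω)·(σ/m_min)^{1/(2n-2)}`, no positive measure with fewer than `n` supports
is `σ`-admissible for the noisy measurement `Y` on the ball `‖ω‖ ≤ Ω`. -/
theorem number_detection_upper_bound_multid
    (k n : ℕ) (hk : 1 ≤ k) (hn : 2 ≤ n) :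
    ∃ C : ℝ, 0 < C ∧
      ∀ (Ω σ : ℝ), 0 < Ω → 0 < σ →
      ∀ (a : Fin n → ℝ) (y : Fin n → EuclideanSpace ℝ (Fin k)),
        (∀ j, 0 < a j) → Function.Injective y →
        (∀ j, ‖y j‖ < ((n : ℝ) - 1) * π / (2 * Ω)) →
        ∀ mmin : ℝ, IsLeast (Set.range a) mmin →
        (∀ p j, p ≠ j → C / Ω * (σ / mmin) ^ ((1 : ℝ) / (2 * (n : ℝ) - 2)) ≤ ‖y p - y j‖) →
        ∀ W : EuclideanSpace ℝ (Fin k) → ℂ,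
          (∀ ω, ‖ω‖ ≤ Ω → ‖W ω‖ < σ) →
        ∀ (m : ℕ), m < n →
        ∀ (b : Fin m → ℝ) (yh : Fin m → EuclideanSpace ℝ (Fin k)),
          (∀ j, 0 < b j) → Function.Injective yh →
          ∃ ω : EuclideanSpace ℝ (Fin k), ‖ω‖ ≤ Ω ∧
            σ ≤ ‖
              ((∑ j, (b j : ℂ) * Complex.exp (Complex.I * (⟪yh j, ω⟫ : ℝ)))
                - ((∑ j, (a j : ℂ) * Complex.exp (Complex.I * (⟪y j, ω⟫ : ℝ))) + W ω))‖ :=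
  number_detection_upper_bound_multid_general k n hn
end

section
/- For every integer n ≥ 4, the inequality (2⌈n/2⌉)! · (2⌈n/2⌉ − 1)! / ((2⌊⌊n/2⌋/2⌋ − 1)!)⁴ ≤ (e¹¹/π²) · (n+1)¹⁰ · 2^{2n−8} holds. -/
/-!
Write `M = 2⌈n/2⌉ - 1` and `B = 2⌊n/4⌋ - 1`, so that `0 ≤ M - 2B ≤ 5`. Then
`(M+1)! M! = (M+1) (M!)²`, `M! ≤ (2B)! M^(M-2B)` and `(2B)! = C(2B,B) (B!)²`. The Wallis-type
bound `(2B+1) C(2B,B)² ≤ 16^B` absorbs the extra factor `M + 1` up to a constant, which leaves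
`(M+1)! M! / (B!)⁴ ≤ 128 (n+1)¹⁰ 2^(2n-8)`, and `128 ≤ 2¹¹/4² ≤ e¹¹/π²`.
-/

open Real Nat

namespace Nat

theorem two_mul_add_one_mul_centralBinom_sq_le (k : ℕ) :
    (2 * k + 1) * centralBinom k ^ 2 ≤ 16 ^ k := by
  induction k with
  | zero => simp
  | succ k ih =>
    refine Nat.le_of_mul_le_mul_left (c := (k + 1) ^ 2) ?_ (by positivity)
    calc (k + 1) ^ 2 * ((2 * (k + 1) + 1) * centralBinom (k + 1) ^ 2)
        = (2 * k + 3) * ((k + 1) * centralBinom (k + 1)) ^ 2 := by ring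
      _ = 4 * ((2 * k + 1) * (2 * k + 3)) * ((2 * k + 1) * centralBinom k ^ 2) := by
        rw [succ_mul_centralBinom_succ]; ring
      _ ≤ 4 * (4 * (k + 1) ^ 2) * 16 ^ k :=
        Nat.mul_le_mul (Nat.mul_le_mul_left 4 (by nlinarith)) ih
      _ = (k + 1) ^ 2 * 16 ^ (k + 1) := by ring

theorem factorial_two_mul (k : ℕ) : (2 * k)! = centralBinom k * k ! ^ 2 := by
  rw [centralBinom, two_mul, ← add_choose_mul_factorial_mul_factorial, sq, mul_assoc]

theorem factorial_le_factorial_mul_pow_sub {k n : ℕ} (h : k ≤ n) : n ! ≤ k ! * n ^ (n - k) :=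
  calc n ! = (n - (n - k))! * n.descFactorial (n - k) :=
        (factorial_mul_descFactorial (sub_le n k)).symm
    _ = k ! * n.descFactorial (n - k) := by rw [Nat.sub_sub_self h]
    _ ≤ k ! * n ^ (n - k) := Nat.mul_le_mul_left _ (descFactorial_le_pow n _)

theorem two_mul_add_one_mul_factorial_succ_mul_factorial_le {B M : ℕ} (h : 2 * B ≤ M) :
    (2 * B + 1) * ((M + 1)! * M !) ≤ (M + 1) * M ^ (2 * (M - 2 * B)) * 16 ^ B * B ! ^ 4 :=
  calc (2 * B + 1) * ((M + 1)! * M !) = (M + 1) * ((2 * B + 1) * M ! ^ 2) := by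
        rw [factorial_succ]; ring
    _ ≤ (M + 1) * ((2 * B + 1) * ((2 * B)! * M ^ (M - 2 * B)) ^ 2) := by
        gcongr; exact factorial_le_factorial_mul_pow_sub h
    _ = (M + 1) * M ^ (2 * (M - 2 * B)) * ((2 * B + 1) * centralBinom B ^ 2) * B ! ^ 4 := by
        rw [factorial_two_mul]; ring
    _ ≤ (M + 1) * M ^ (2 * (M - 2 * B)) * 16 ^ B * B ! ^ 4 := by
        gcongr; exact two_mul_add_one_mul_centralBinom_sq_le B

end Nat

theorem factorial_ratio_bound_nat (n : ℕ) (hn : 4 ≤ n) :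
    (2 * ((n + 1) / 2))! * (2 * ((n + 1) / 2) - 1)!
      ≤ 128 * (n + 1) ^ 10 * 2 ^ (2 * n - 8) * (2 * (n / 2 / 2) - 1)! ^ 4 := by
  obtain ⟨M, hM⟩ : ∃ M, 2 * ((n + 1) / 2) = M + 1 := ⟨2 * ((n + 1) / 2) - 1, by omega⟩
  set B := 2 * (n / 2 / 2) - 1
  rw [hM, Nat.add_sub_cancel]
  have hMB : 2 * B ≤ M := by omega
  have hM_pow : M ^ (2 * (M - 2 * B)) ≤ (n + 1) ^ 10 :=
    (Nat.pow_le_pow_left (by omega) _).trans (Nat.pow_le_pow_right (by omega) (by omega))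
  have hB_pow : 16 ^ B ≤ 16 * 2 ^ (2 * n - 8) := by
    rw [show 16 = 2 ^ 4 by rfl, ← pow_mul, ← pow_add]
    exact Nat.pow_le_pow_right (by omega) (by omega)
  refine Nat.le_of_mul_le_mul_left (c := 2 * B + 1) ?_ (by omega)
  calc (2 * B + 1) * ((M + 1)! * M !) ≤ (M + 1) * M ^ (2 * (M - 2 * B)) * 16 ^ B * B ! ^ 4 :=
        two_mul_add_one_mul_factorial_succ_mul_factorial_le hMB
    _ ≤ (8 * (2 * B + 1)) * (n + 1) ^ 10 * (16 * 2 ^ (2 * n - 8)) * B ! ^ 4 := by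
        gcongr; omega
    _ = (2 * B + 1) * (128 * (n + 1) ^ 10 * 2 ^ (2 * n - 8) * B ! ^ 4) := by ring

theorem le_exp_one_pow_eleven_div_pi_sq : (128 : ℝ) ≤ exp 1 ^ 11 / π ^ 2 := by
  rw [le_div_iff₀ (by positivity)]
  calc (128 : ℝ) * π ^ 2 ≤ 128 * 4 ^ 2 := by gcongr; exact pi_le_four
    _ = 2 ^ 11 := by norm_num
    _ ≤ exp 1 ^ 11 := by gcongr; exact exp_one_gt_two.le

/-- Lemma `numberlowerboundcalculate1`, for `n ≥ 4`:
`(2⌈n/2⌉)!·(2⌈n/2⌉-1)!/((2⌊⌊n/2⌋/2⌋-1)!)⁴ ≤ (e¹¹/π²)·(n+1)¹⁰·2^{2n-8}`.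
Here `⌈n/2⌉ = (n+1)/2` and `⌊⌊n/2⌋/2⌋ = n/2/2` with natural division. -/
theorem factorial_ratio_bound (n : ℕ) (hn : 4 ≤ n) :
    ((2 * ((n + 1) / 2)).factorial : ℝ) * ((2 * ((n + 1) / 2) - 1).factorial : ℝ)
        / ((2 * (n / 2 / 2) - 1).factorial : ℝ) ^ 4
      ≤ Real.exp 1 ^ 11 / π ^ 2 * ((n : ℝ) + 1) ^ 10 * 2 ^ (2 * n - 8) := by
  rw [div_le_iff₀ (by positivity)]
  calc ((2 * ((n + 1) / 2))! : ℝ) * (2 * ((n + 1) / 2) - 1)!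
      ≤ 128 * ((n : ℝ) + 1) ^ 10 * 2 ^ (2 * n - 8) * ((2 * (n / 2 / 2) - 1)! : ℝ) ^ 4 := by
        exact_mod_cast factorial_ratio_bound_nat n hn
    _ ≤ _ := by gcongr; exact le_exp_one_pow_eleven_div_pi_sq
end

section
/- Let n ≥ 2 be an integer and let C = {1, 2, …, n}. Then: (1) min_{z∈C} Π_{x∈C, x≠z} |x − z| = (⌈n/2⌉ − 1)! · (⌊n/2⌋)!, and this minimum is attained at z = ⌈n/2⌉; (2) max_{z∈C} Π_{x∈C, x≠z} |x − z| = (n−1)!, and the set of maximizers is exactly {1, n}. -/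
/-!
The product for `z = k` is `(k - 1)! * (n - k)!`, which equals `(n - 1)! / (n - 1).choose (k - 1)`.
Minimising or maximising it over `k` therefore amounts to maximising or minimising a binomial
coefficient in a row of Pascal's triangle: it is largest in the middle, and equals `1` exactly at the
two ends.
-/

open Finset Nat

namespace Nat

theorem factorial_mul_factorial_le_factorial_add (i j : ℕ) : i ! * j ! ≤ (i + j)! :=
  Nat.le_of_dvd (factorial_pos _) (factorial_mul_factorial_dvd_factorial_add i j)

theorem factorial_mul_factorial_eq_factorial_add_iff {i j : ℕ} :
    i ! * j ! = (i + j)! ↔ i = 0 ∨ j = 0 := by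
  rw [← add_choose_mul_factorial_mul_factorial, Nat.mul_assoc, eq_comm,
    Nat.mul_eq_right (by positivity), choose_eq_one_iff]
  omega

/-- Multiply both sides by the middle binomial coefficient and use `choose_le_middle`. -/
theorem factorial_half_mul_factorial_half_le (i j : ℕ) :
    ((i + j) / 2)! * ((i + j + 1) / 2)! ≤ i ! * j ! := by
  have hmid := add_choose_mul_factorial_mul_factorial ((i + j) / 2) ((i + j + 1) / 2)
  rw [← choose_symm_add, show (i + j) / 2 + (i + j + 1) / 2 = i + j by omega] at hmid
  have hij := add_choose_mul_factorial_mul_factorial i j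
  refine Nat.le_of_mul_le_mul_left ?_ (choose_pos (Nat.div_le_self (i + j) 2))
  calc (i + j).choose ((i + j) / 2) * (((i + j) / 2)! * ((i + j + 1) / 2)!)
      = (i + j).choose j * (i ! * j !) := by rw [← Nat.mul_assoc, hmid, ← hij, Nat.mul_assoc]
    _ ≤ (i + j).choose ((i + j) / 2) * (i ! * j !) := by gcongr; exact choose_le_middle j _

end Nat

theorem Int.prod_Ioc_abs_sub (a : ℤ) (j : ℕ) : ∏ x ∈ Ioc a (a + j), |x - a| = j ! := by
  rw [← prod_range_add_one_eq_factorial, Nat.cast_prod]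
  refine prod_nbij' (fun x => (x - a - 1).toNat) (fun m => a + m + 1) ?_ ?_ ?_ ?_ ?_ <;>
    intro x hx <;> simp only [mem_Ioc, mem_range] at hx ⊢ <;> try omega
  rw [abs_of_pos (by omega)]; push_cast; omega

theorem Int.prod_Ico_abs_sub (a : ℤ) (i : ℕ) : ∏ x ∈ Ico (a - i) a, |x - a| = i ! := by
  rw [← prod_range_add_one_eq_factorial, Nat.cast_prod]
  refine prod_nbij' (fun x => (a - x - 1).toNat) (fun m => a - m - 1) ?_ ?_ ?_ ?_ ?_ <;>
    intro x hx <;> simp only [mem_Ico, mem_range] at hx ⊢ <;> try omega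
  rw [abs_of_neg (by omega)]; push_cast; omega

theorem Int.prod_erase_Icc_abs_sub (a : ℤ) (i j : ℕ) :
    ∏ x ∈ (Icc (a - i) (a + j)).erase a, |x - a| = i ! * j ! := by
  have hsplit : (Icc (a - i) (a + j)).erase a = Ico (a - i) a ∪ Ioc a (a + j) := by
    ext x; simp only [mem_erase, mem_Icc, mem_union, mem_Ico, mem_Ioc]; omega
  have hdisj : Disjoint (Ico (a - i) a) (Ioc a (a + j)) :=
    disjoint_left.2 fun x hx hx' => by rw [mem_Ico] at hx; rw [mem_Ioc] at hx'; omega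
  rw [hsplit, prod_union hdisj, prod_Ico_abs_sub, prod_Ioc_abs_sub]

theorem Int.exists_prod_erase_Icc_one_abs_sub {n : ℕ} {z : ℤ} (hz : z ∈ Icc 1 (n : ℤ)) :
    ∃ i j : ℕ, i + j + 1 = n ∧ z = i + 1 ∧
      ∏ x ∈ (Icc 1 (n : ℤ)).erase z, |x - z| = i ! * j ! := by
  rw [mem_Icc] at hz
  refine ⟨(z - 1).toNat, (n - z).toNat, by omega, by omega, ?_⟩
  rw [← prod_erase_Icc_abs_sub]
  congr 3 <;> omega

/-- Lemma `lem:produc-min-max-2`: for `C = {1,…,n}` (as integers),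
(1) `min_{z∈C} Π_{x∈C, x≠z} |x-z| = (⌈n/2⌉-1)!·(⌊n/2⌋)!`, attained at `z = ⌈n/2⌉`;
(2) `max_{z∈C} Π_{x∈C, x≠z} |x-z| = (n-1)!`, with maximizer set exactly `{1, n}`.
Here `⌈n/2⌉ = (n+1)/2` and `⌊n/2⌋ = n/2` with natural division. -/
theorem product_of_distances_min_max (n : ℕ) (hn : 2 ≤ n) :
    (∀ z ∈ Finset.Icc (1 : ℤ) (n : ℤ),
        ((((n + 1) / 2 - 1).factorial : ℤ) * ((n / 2).factorial : ℤ)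
          ≤ ∏ x ∈ (Finset.Icc (1 : ℤ) (n : ℤ)).erase z, |x - z|)) ∧
    (∏ x ∈ (Finset.Icc (1 : ℤ) (n : ℤ)).erase (((n + 1) / 2 : ℕ) : ℤ),
        |x - (((n + 1) / 2 : ℕ) : ℤ)|
      = (((n + 1) / 2 - 1).factorial : ℤ) * ((n / 2).factorial : ℤ)) ∧
    (∀ z ∈ Finset.Icc (1 : ℤ) (n : ℤ),
        ∏ x ∈ (Finset.Icc (1 : ℤ) (n : ℤ)).erase z, |x - z| ≤ ((n - 1).factorial : ℤ)) ∧
    (∀ z ∈ Finset.Icc (1 : ℤ) (n : ℤ),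
        (∏ x ∈ (Finset.Icc (1 : ℤ) (n : ℤ)).erase z, |x - z| = ((n - 1).factorial : ℤ)
          ↔ z = 1 ∨ z = (n : ℤ))) := by
  refine ⟨fun z hz => ?_, ?_, fun z hz => ?_, fun z hz => ?_⟩
  · obtain ⟨i, j, rfl, rfl, hprod⟩ := Int.exists_prod_erase_Icc_one_abs_sub hz
    rw [hprod, show (i + j + 1 + 1) / 2 - 1 = (i + j) / 2 by omega]
    exact_mod_cast factorial_half_mul_factorial_half_le i j
  · have hz : (((n + 1) / 2 : ℕ) : ℤ) ∈ Icc 1 (n : ℤ) := by rw [mem_Icc]; omega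
    obtain ⟨i, j, hijn, hzi, hprod⟩ := Int.exists_prod_erase_Icc_one_abs_sub hz
    rw [hprod, show i = (n + 1) / 2 - 1 by omega, show j = n / 2 by omega]
  · obtain ⟨i, j, rfl, rfl, hprod⟩ := Int.exists_prod_erase_Icc_one_abs_sub hz
    rw [hprod, Nat.add_sub_cancel]
    exact_mod_cast factorial_mul_factorial_le_factorial_add i j
  · obtain ⟨i, j, rfl, rfl, hprod⟩ := Int.exists_prod_erase_Icc_one_abs_sub hz
    rw [hprod, Nat.add_sub_cancel]
    exact_mod_cast factorial_mul_factorial_eq_factorial_add_iff.trans (by omega)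
end

section
/- Let n ≥ 1 be an integer and let p, q ∈ ℝ with p > q > 0. Set x_j = (j−1)p for j = 1,…,n and y_j = (j−1)p − q. Then: (1) max over z ∈ {y_1,…,y_n} of Π_{i=1}^n |z − x_i| equals Π_{j=0}^{n−1} (q + pj), and this maximum is attained at z = y_1; (2) max over z ∈ {y_1,…,y_{n+1}} of Π_{i=1}^n |z − x_i| equals Π_{j=0}^{n−1} (max(p−q, q) + pj), and it is attained at y_1 or at y_{n+1}. -/
/-!
The point `y_{k+1} = kp - q` has `k` grid points to its left, at distances `p - q + pj`
(`j < k`), and `n - k` to its right, at distances `q + pj` (`j < n - k`). So the product at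
`y_{k+1}` is `P(p - q, k) · P(q, n - k)`, where `P(a, m) = Π_{j<m} (a + pj)` is monotone in `a`
and satisfies `P(a, k + l) = P(a, k) · P(a + pk, l)`. For `k < n`, writing
`P(q, n) = P(q, n - k) · P(q + p(n - k), k)` and using `p - q ≤ q + p(n - k)` bounds the product
by `P(q, n)`. For `k ≤ n`, writing `P(M, n) = P(M, k) · P(M + pk, n - k)` with
`M = max (p - q) q` bounds it by `P(M, n)`, which is attained at `k = 0` or `k = n`.
-/

open Finset

/-- The product `Π_{i=1}^n |z - x_i|` with `x_i = (i-1)p` (0-based: `x_i = i·p`). -/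
noncomputable def gridProd (n : ℕ) (p z : ℝ) : ℝ := ∏ i : Fin n, |z - (i : ℝ) * p|

section ArithProd

variable (a b p : ℝ) (k l n : ℕ)

noncomputable def arithProd : ℝ := ∏ j ∈ range n, (a + p * j)

theorem arithProd_add :
    arithProd a p (k + l) = arithProd a p k * arithProd (a + p * k) p l := by
  simp only [arithProd, prod_range_add, Nat.cast_add, mul_add, add_assoc]

variable {a b p}

theorem arithProd_nonneg (ha : 0 ≤ a) (hp : 0 ≤ p) : 0 ≤ arithProd a p n :=
  prod_nonneg fun _ _ => by positivity

theorem arithProd_le_arithProd (ha : 0 ≤ a) (hab : a ≤ b) (hp : 0 ≤ p) :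
    arithProd a p n ≤ arithProd b p n :=
  prod_le_prod (fun _ _ => by positivity) fun _ _ => by linarith

end ArithProd

section GridProd

variable {p q : ℝ} {k n : ℕ}

theorem gridProd_eq_arithProd_mul (hq : 0 ≤ q) (hqp : q ≤ p) (hk : k ≤ n) :
    gridProd n p (k * p - q) = arithProd (p - q) p k * arithProd q p (n - k) := by
  have hp : 0 ≤ p := hq.trans hqp
  rw [gridProd, Fin.prod_univ_eq_prod_range (fun i => |(k : ℝ) * p - q - i * p|),
    ← Nat.add_sub_cancel' hk, prod_range_add, Nat.add_sub_cancel_left, arithProd, arithProd,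
    ← prod_range_reflect]
  congr 1
  · refine prod_congr rfl fun j hj => ?_
    have hjk : j < k := mem_range.mp hj
    rw [Nat.cast_sub (by omega), Nat.cast_sub (by omega), Nat.cast_one,
      show (k : ℝ) * p - q - (k - 1 - j) * p = p - q + p * j by ring,
      abs_of_nonneg (by nlinarith)]
  · refine prod_congr rfl fun j _ => ?_
    rw [show (k : ℝ) * p - q - ((k + j : ℕ) : ℝ) * p = -(q + p * j) by push_cast; ring,
      abs_neg, abs_of_nonneg (by positivity)]

theorem gridProd_neg (hq : 0 ≤ q) (hqp : q ≤ p) : gridProd n p (-q) = arithProd q p n := by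
  simpa [arithProd] using gridProd_eq_arithProd_mul (k := 0) (n := n) hq hqp (Nat.zero_le n)

theorem gridProd_last (hq : 0 ≤ q) (hqp : q ≤ p) :
    gridProd n p (n * p - q) = arithProd (p - q) p n := by
  simpa [arithProd] using gridProd_eq_arithProd_mul hq hqp le_rfl

theorem gridProd_le_arithProd (hq : 0 ≤ q) (hqp : q ≤ p) (hk : k < n) :
    gridProd n p (k * p - q) ≤ arithProd q p n := by
  have hp : 0 ≤ p := hq.trans hqp
  have hnk : (1 : ℝ) ≤ (n - k : ℕ) := by exact_mod_cast (by omega : 1 ≤ n - k)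
  rw [gridProd_eq_arithProd_mul hq hqp hk.le, mul_comm, ← Nat.sub_add_cancel hk.le,
    arithProd_add, Nat.add_sub_cancel]
  exact mul_le_mul_of_nonneg_left
    (arithProd_le_arithProd k (by linarith) (by nlinarith) hp) (arithProd_nonneg _ hq hp)

theorem gridProd_le_arithProd_max (hq : 0 ≤ q) (hqp : q ≤ p) (hk : k ≤ n) :
    gridProd n p (k * p - q) ≤ arithProd (max (p - q) q) p n := by
  have hp : 0 ≤ p := hq.trans hqp
  have hM : 0 ≤ max (p - q) q := hq.trans (le_max_right _ _)
  rw [gridProd_eq_arithProd_mul hq hqp hk, ← Nat.add_sub_cancel' hk, arithProd_add,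
    Nat.add_sub_cancel_left]
  exact mul_le_mul (arithProd_le_arithProd k (by linarith) (le_max_left _ _) hp)
    (arithProd_le_arithProd _ hq (by nlinarith [le_max_right (p - q) q]) hp)
    (arithProd_nonneg _ (by linarith) hp) (arithProd_nonneg _ hM hp)

end GridProd

theorem interleaved_grid_max_product_general
    (n : ℕ) (p q : ℝ) (hq : 0 < q) (hpq : q < p) :
    (∀ j : Fin n, gridProd n p ((j : ℝ) * p - q) ≤ ∏ j ∈ Finset.range n, (q + p * (j : ℝ))) ∧
    (gridProd n p (-q) = ∏ j ∈ Finset.range n, (q + p * (j : ℝ))) ∧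
    (∀ j : Fin (n + 1),
      gridProd n p ((j : ℝ) * p - q) ≤ ∏ j ∈ Finset.range n, (max (p - q) q + p * (j : ℝ))) ∧
    (gridProd n p (-q) = ∏ j ∈ Finset.range n, (max (p - q) q + p * (j : ℝ)) ∨
      gridProd n p ((n : ℝ) * p - q) = ∏ j ∈ Finset.range n, (max (p - q) q + p * (j : ℝ))) := by
  refine ⟨fun j => gridProd_le_arithProd hq.le hpq.le j.isLt, gridProd_neg hq.le hpq.le,
    fun j => gridProd_le_arithProd_max hq.le hpq.le (Nat.lt_succ_iff.mp j.isLt), ?_⟩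
  rcases le_total q (p - q) with h | h
  · exact .inr (by rw [gridProd_last hq.le hpq.le, max_eq_left h]; rfl)
  · exact .inl (by rw [gridProd_neg hq.le hpq.le, max_eq_right h]; rfl)

/-- Lemma `lem:product2`, cases (3) and (4): with `x_j = (j-1)p` and
`y_j = (j-1)p - q`,
(1) `max_{z∈{y_1,…,y_n}} Π_{i=1}^n |z - x_i| = Π_{j=0}^{n-1}(q + pj)`, attained at `y_1`;
(2) `max_{z∈{y_1,…,y_{n+1}}} Π_{i=1}^n |z - x_i| = Π_{j=0}^{n-1}(max(p-q,q) + pj)`, attained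
at `y_1` or `y_{n+1}`. -/
theorem interleaved_grid_max_product
    (n : ℕ) (hn : 1 ≤ n) (p q : ℝ) (hq : 0 < q) (hpq : q < p) :
    (∀ j : Fin n, gridProd n p ((j : ℝ) * p - q) ≤ ∏ j ∈ Finset.range n, (q + p * (j : ℝ))) ∧
    (gridProd n p (-q) = ∏ j ∈ Finset.range n, (q + p * (j : ℝ))) ∧
    (∀ j : Fin (n + 1),
      gridProd n p ((j : ℝ) * p - q) ≤ ∏ j ∈ Finset.range n, (max (p - q) q + p * (j : ℝ))) ∧
    (gridProd n p (-q) = ∏ j ∈ Finset.range n, (max (p - q) q + p * (j : ℝ)) ∨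
      gridProd n p ((n : ℝ) * p - q) = ∏ j ∈ Finset.range n, (max (p - q) q + p * (j : ℝ))) :=
  interleaved_grid_max_product_general n p q hq hpq
end

section
/- Let n ≥ 4 be an integer, let τ > 0, and let s ≥ 2 be a real number. Define t_1,…,t_{2n} by: for even j ∈ {2,4,…,2n}, t_j = −((sn−2)/2)τ + ((j−2)s/2)τ; for odd j ∈ {1,3,…,2n−1}, t_j = t_{4⌈(j+1)/4⌉−2} + (−1)^{(j+1)/2}τ. Partition these points into the four classes C₁ = {t_{4j−2} : 1 ≤ j ≤ ⌈n/2⌉}, C₂ = {t_{4j} : 1 ≤ j ≤ ⌊n/2⌋}, C₃ = {t_{4j−3} : 1 ≤ j ≤ ⌈n/2⌉}, C₄ = {t_{4j−1} : 1 ≤ j ≤ ⌊n/2⌋}, and for k = 1,2,3,4 define c_k^min = min_{x∈C_k} Π_{p=1}^{4} Π_{y∈C_p, y≠x} |x − y|. Then min_{k=1,2,3,4} c_k^min ≥ τ^{2n−1} · s^{2n−3} · ((2⌊⌊n/2⌋/2⌋ − 1)!)⁴. -/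
open Finset

/-- Class `C₁ = {t_{4j-2} : 1 ≤ j ≤ ⌈n/2⌉}` (0-based: indices `4j+2`). -/
noncomputable def classC1 (n : ℕ) (t : ℕ → ℝ) : Finset ℝ :=
  Finset.univ.image fun j : Fin ((n + 1) / 2) => t (4 * (j : ℕ) + 2)

/-- Class `C₂ = {t_{4j} : 1 ≤ j ≤ ⌊n/2⌋}` (0-based: indices `4j+4`). -/
noncomputable def classC2 (n : ℕ) (t : ℕ → ℝ) : Finset ℝ :=
  Finset.univ.image fun j : Fin (n / 2) => t (4 * (j : ℕ) + 4)

/-- Class `C₃ = {t_{4j-3} : 1 ≤ j ≤ ⌈n/2⌉}` (0-based: indices `4j+1`). -/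
noncomputable def classC3 (n : ℕ) (t : ℕ → ℝ) : Finset ℝ :=
  Finset.univ.image fun j : Fin ((n + 1) / 2) => t (4 * (j : ℕ) + 1)

/-- Class `C₄ = {t_{4j-1} : 1 ≤ j ≤ ⌊n/2⌋}` (0-based: indices `4j+3`). -/
noncomputable def classC4 (n : ℕ) (t : ℕ → ℝ) : Finset ℝ :=
  Finset.univ.image fun j : Fin (n / 2) => t (4 * (j : ℕ) + 3)

/-- The product `Π_{p=1}^4 Π_{y ∈ C_p, y ≠ x} |x - y|`. -/
noncomputable def classDistProd (n : ℕ) (t : ℕ → ℝ) (x : ℝ) : ℝ :=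
  (∏ y ∈ (classC1 n t).erase x, |x - y|) * (∏ y ∈ (classC2 n t).erase x, |x - y|) *
  (∏ y ∈ (classC3 n t).erase x, |x - y|) * ∏ y ∈ (classC4 n t).erase x, |x - y|


/-!
Put `h = s τ`. The four classes are arithmetic progressions of step `2h` with offsets `0`, `h`,
`-τ`, `τ` from a common base point. In a `2h`-separated set at most `r` points lie at distance
`< r h` from any given `x`, so after sorting, the `r`-th nearest point is at distance `≥ r h`
(`≥ (r + 1) h` if `x` itself belongs to the set and is skipped). Hence the distances from `x` to
an `m`-point class multiply to at least `h ^ (m - 1) (m - 1)!`, times the gap from `x` to that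
class when `x` is not in it. The three gaps from `x` to the other classes multiply to at least
`h τ²` (they are `h, τ, τ`, or `h, h - τ, h - τ`, or `τ, h - τ, 2τ`, and `h ≥ 2τ`), and the four
class sizes `⌈n/2⌉, ⌊n/2⌋, ⌈n/2⌉, ⌊n/2⌋` sum to `2n`.
-/

section SeparatedSets

theorem prod_range_le_prod_of_card_filter_lt_le {ι : Type*} [DecidableEq ι] (T : Finset ι)
    (f : ι → ℝ) (b : ℕ → ℝ) (hb : ∀ r, 0 ≤ b r) (hT : ∀ r < #T, #{i ∈ T | f i < b r} ≤ r) :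
    ∏ r ∈ range #T, b r ≤ ∏ i ∈ T, f i := by
  induction hm : #T generalizing T with
  | zero => simp [card_eq_zero.1 hm]
  | succ m ih =>
    obtain ⟨i, hi, hmax⟩ := exists_max_image T f (card_pos.1 (by omega))
    have hbi : b m ≤ f i := by
      by_contra! hlt
      have hall : #{j ∈ T | f j < b m} = #T :=
        congrArg card (filter_true_of_mem fun j hj => (hmax j hj).trans_lt hlt)
      have := hT m (by omega)
      omega
    have hcard : #(T.erase i) = m := by rw [card_erase_of_mem hi, hm, Nat.add_sub_cancel]
    have hrec : ∏ r ∈ range m, b r ≤ ∏ j ∈ T.erase i, f j :=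
      ih (T.erase i) (fun r hr => (card_le_card (filter_subset_filter _ (erase_subset i T))).trans
        (hT r (by omega))) hcard
    rw [prod_range_succ, ← mul_prod_erase T f hi, mul_comm (f i)]
    exact mul_le_mul hrec hbi (hb m) ((prod_nonneg fun r _ => hb r).trans hrec)

theorem prod_range_natCast_succ_mul (m : ℕ) (h : ℝ) :
    ∏ r ∈ range m, ((r + 1 : ℕ) : ℝ) * h = h ^ m * m.factorial := by
  rw [prod_mul_distrib, prod_const, card_range, ← Nat.cast_prod, prod_range_add_one_eq_factorial,
    mul_comm]

variable {S : Finset ℝ} {h x : ℝ}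

theorem card_filter_abs_sub_lt_le (hh : 0 < h)
    (hS : (S : Set ℝ).Pairwise fun y z => 2 * h ≤ |y - z|) (x : ℝ) (r : ℕ) :
    #{y ∈ S | |x - y| < r * h} ≤ r := by
  set u : ℝ → ℝ := fun y => (y - x + r * h) / (2 * h)
  have hu : ∀ y ∈ {y ∈ S | |x - y| < r * h}, 0 ≤ u y ∧ u y < r := fun y hy => by
    have hy := abs_sub_lt_iff.1 (mem_filter.1 hy).2
    exact ⟨div_nonneg (by linarith) (by linarith), (div_lt_iff₀ (by linarith)).2 (by linarith)⟩
  -- Two points with the same `⌊u ·⌋` would be closer than `2 * h`.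
  calc #{y ∈ S | |x - y| < r * h} ≤ #(range r) := by
        refine card_le_card_of_injOn (fun y => ⌊u y⌋.toNat) (fun y hy => ?_)
          (fun y hy z hz hyz => ?_)
        · simpa [Int.toNat_lt (Int.floor_nonneg.2 (hu y hy).1), Int.floor_lt] using (hu y hy).2
        · have hfl : ⌊u y⌋ = ⌊u z⌋ := by
            simpa [Int.toNat_of_nonneg (Int.floor_nonneg.2 (hu y hy).1),
              Int.toNat_of_nonneg (Int.floor_nonneg.2 (hu z hz).1)] using
              congrArg (fun k : ℕ => (k : ℤ)) hyz
          have hlt := Int.abs_sub_lt_one_of_floor_eq_floor hfl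
          rw [show u y - u z = (y - z) / (2 * h) by simp only [u]; ring, abs_div,
            abs_of_pos (by linarith : (0 : ℝ) < 2 * h), div_lt_one (by linarith)] at hlt
          by_contra hne
          linarith [hS (mem_filter.1 hy).1 (mem_filter.1 hz).1 hne]
    _ = r := card_range r

theorem pow_mul_factorial_le_prod_erase_abs_sub (hh : 0 < h)
    (hS : (S : Set ℝ).Pairwise fun y z => 2 * h ≤ |y - z|) (hx : x ∈ S) :
    h ^ (#S - 1) * (#S - 1).factorial ≤ ∏ y ∈ S.erase x, |x - y| := by
  have key := prod_range_le_prod_of_card_filter_lt_le (S.erase x) (fun y => |x - y|)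
    (fun r => ((r + 1 : ℕ) : ℝ) * h) (fun r => by positivity) fun r _ => by
      rw [filter_erase, card_erase_of_mem (by simp [hx]; positivity)]
      have := card_filter_abs_sub_lt_le hh hS x (r + 1)
      omega
  rwa [card_erase_of_mem hx, prod_range_natCast_succ_mul] at key

theorem mul_pow_mul_factorial_le_prod_erase_abs_sub {g : ℝ} (hh : 0 < h)
    (hS : (S : Set ℝ).Pairwise fun y z => 2 * h ≤ |y - z|) (hne : S.Nonempty) (hg : 0 < g)
    (hgap : ∀ y ∈ S, g ≤ |x - y|) :
    g * (h ^ (#S - 1) * (#S - 1).factorial) ≤ ∏ y ∈ S.erase x, |x - y| := by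
  rw [erase_eq_of_notMem fun hx => by simpa using (hgap x hx).trans_lt' hg]
  have key := prod_range_le_prod_of_card_filter_lt_le S (fun y => |x - y|)
    (fun r => if r = 0 then g else r * h) (fun r => by split_ifs <;> positivity) fun r _ => by
      split_ifs with hr
      · simp [hr, filter_eq_empty_iff.2 fun y hy => not_lt.2 (hgap y hy)]
      · exact card_filter_abs_sub_lt_le hh hS x r
  obtain ⟨m, hm⟩ : ∃ m, #S = m + 1 := ⟨#S - 1, by have := hne.card_pos; omega⟩
  rw [hm, prod_range_succ'] at key
  simp only [Nat.add_one_ne_zero, if_false, if_true] at key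
  rwa [hm, Nat.add_sub_cancel, mul_comm g, ← prod_range_natCast_succ_mul]

end SeparatedSets

noncomputable def progression (a d : ℝ) (m : ℕ) : Finset ℝ :=
  (range m).image fun k : ℕ => a + k * d

section Progression

variable {a b d g x y : ℝ} {k m : ℕ}

theorem mem_progression : y ∈ progression a d m ↔ ∃ j < m, a + j * d = y := by
  simp [progression]

theorem card_progression (hd : d ≠ 0) : #(progression a d m) = m := by
  rw [progression, card_image_of_injective _ fun i j hij => by simpa [hd] using hij, card_range]

theorem pairwise_le_abs_sub_progression (hd : 0 ≤ d) :
    (progression a d m : Set ℝ).Pairwise fun y z => d ≤ |y - z| := by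
  rintro _ hy _ hz hyz
  obtain ⟨i, -, rfl⟩ := mem_progression.1 hy
  obtain ⟨j, -, rfl⟩ := mem_progression.1 hz
  rw [le_abs]
  rcases lt_trichotomy i j with hij | rfl | hij
  · have : ((i : ℝ) + 1) * d ≤ j * d := by gcongr; exact_mod_cast hij
    right; linarith
  · exact absurd rfl hyz
  · have : ((j : ℝ) + 1) * d ≤ i * d := by gcongr; exact_mod_cast hij
    left; linarith

theorem le_abs_sub_of_mem_progression (hg : g ≤ a - b) (hgd : a - b ≤ d - g)
    (hx : x ∈ progression a d k) (hy : y ∈ progression b d m) : g ≤ |x - y| := by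
  rcases le_or_gt g 0 with hg0 | hg0
  · exact hg0.trans (abs_nonneg _)
  have hd : 0 ≤ d := by linarith
  obtain ⟨i, -, rfl⟩ := mem_progression.1 hx
  obtain ⟨j, -, rfl⟩ := mem_progression.1 hy
  rw [le_abs]
  rcases lt_trichotomy i j with hij | rfl | hij
  · have : ((i : ℝ) + 1) * d ≤ j * d := by gcongr; exact_mod_cast hij
    right; linarith
  · left; linarith
  · have : ((j : ℝ) + 1) * d ≤ i * d := by gcongr; exact_mod_cast hij
    left; linarith

theorem pow_mul_factorial_le_prod_erase_progression {h : ℝ} (hh : 0 < h)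
    (hx : x ∈ progression a (2 * h) m) :
    h ^ (m - 1) * (m - 1).factorial ≤ ∏ y ∈ (progression a (2 * h) m).erase x, |x - y| := by
  simpa only [card_progression (by positivity : 2 * h ≠ 0)] using
    pow_mul_factorial_le_prod_erase_abs_sub hh (pairwise_le_abs_sub_progression (by positivity)) hx

theorem mul_pow_mul_factorial_le_prod_erase_progression {h : ℝ} (hh : 0 < h) (hm : 0 < m)
    (hg : 0 < g) (hgap : ∀ y ∈ progression b (2 * h) m, g ≤ |x - y|) :
    g * (h ^ (m - 1) * (m - 1).factorial) ≤ ∏ y ∈ (progression b (2 * h) m).erase x, |x - y| := by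
  have hcard : #(progression b (2 * h) m) = m := card_progression (by positivity)
  simpa only [hcard] using mul_pow_mul_factorial_le_prod_erase_abs_sub hh
    (pairwise_le_abs_sub_progression (by positivity)) (card_pos.1 (by rwa [hcard])) hg hgap

theorem image_fin_eq_progression {f : ℕ → ℝ} (hf : ∀ j < m, f j = a + j * d) :
    univ.image (fun j : Fin m => f j) = progression a d m := by
  ext y
  simp only [mem_image, mem_univ, true_and, mem_progression]
  constructor
  · rintro ⟨j, rfl⟩
    exact ⟨j, j.2, (hf j j.2).symm⟩
  · rintro ⟨j, hj, rfl⟩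
    exact ⟨⟨j, hj⟩, hf j hj⟩

end Progression

theorem exists_classes_eq_progression {n : ℕ} {τ s : ℝ} {t : ℕ → ℝ}
    (ht_even : ∀ j : ℕ, 1 ≤ j → j ≤ 2 * n → j % 2 = 0 →
      t j = -((s * (n : ℝ) - 2) / 2) * τ + (((j : ℝ) - 2) * s / 2) * τ)
    (ht_odd : ∀ j : ℕ, 1 ≤ j → j ≤ 2 * n → j % 2 = 1 →
      t j = t (4 * ((j + 4) / 4) - 2) + (-1 : ℝ) ^ ((j + 1) / 2) * τ) :
    ∃ c, classC1 n t = progression c (2 * (s * τ)) ((n + 1) / 2) ∧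
      classC2 n t = progression (c + s * τ) (2 * (s * τ)) (n / 2) ∧
      classC3 n t = progression (c - τ) (2 * (s * τ)) ((n + 1) / 2) ∧
      classC4 n t = progression (c + τ) (2 * (s * τ)) (n / 2) := by
  set c := -((s * (n : ℝ) - 2) / 2) * τ
  have h₁ : ∀ j < (n + 1) / 2, t (4 * j + 2) = c + j * (2 * (s * τ)) := fun j hj => by
    rw [ht_even _ (by omega) (by omega) (by omega)]; push_cast; ring
  have h₂ : ∀ j < n / 2, t (4 * j + 4) = c + s * τ + j * (2 * (s * τ)) := fun j hj => by
    rw [ht_even _ (by omega) (by omega) (by omega)]; push_cast; ring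
  have h₃ : ∀ j < (n + 1) / 2, t (4 * j + 1) = c - τ + j * (2 * (s * τ)) := fun j hj => by
    rw [ht_odd _ (by omega) (by omega) (by omega),
      show 4 * ((4 * j + 1 + 4) / 4) - 2 = 4 * j + 2 by omega,
      show (4 * j + 1 + 1) / 2 = 2 * j + 1 by omega, h₁ j hj, pow_succ, pow_mul]
    norm_num; ring
  have h₄ : ∀ j < n / 2, t (4 * j + 3) = c + τ + j * (2 * (s * τ)) := fun j hj => by
    rw [ht_odd _ (by omega) (by omega) (by omega),
      show 4 * ((4 * j + 3 + 4) / 4) - 2 = 4 * j + 2 by omega,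
      show (4 * j + 3 + 1) / 2 = 2 * (j + 1) by omega, h₁ j (by omega), pow_mul]
    norm_num; ring
  exact ⟨c, image_fin_eq_progression h₁, image_fin_eq_progression h₂,
    image_fin_eq_progression h₃, image_fin_eq_progression h₄⟩

theorem pow_mul_factorial_pow_le_sq {n : ℕ} (hn : 2 ≤ n) {h : ℝ} (hh : 0 ≤ h) :
    h ^ (2 * n - 4) * ((2 * (n / 2 / 2) - 1).factorial : ℝ) ^ 4 ≤
      (h ^ ((n + 1) / 2 - 1) * ((n + 1) / 2 - 1).factorial *
        (h ^ (n / 2 - 1) * (n / 2 - 1).factorial)) ^ 2 := by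
  have hf : ∀ m, n / 2 ≤ m → ((2 * (n / 2 / 2) - 1).factorial : ℝ) ≤ (m - 1).factorial :=
    fun m hm => by exact_mod_cast Nat.factorial_le (by omega)
  have hf₁ := hf ((n + 1) / 2) (by omega)
  have hf₂ := hf (n / 2) le_rfl
  calc h ^ (2 * n - 4) * ((2 * (n / 2 / 2) - 1).factorial : ℝ) ^ 4
      = (h ^ ((n + 1) / 2 - 1) * ((2 * (n / 2 / 2) - 1).factorial : ℝ) *
          (h ^ (n / 2 - 1) * ((2 * (n / 2 / 2) - 1).factorial : ℝ))) ^ 2 := by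
        rw [show 2 * n - 4 = 2 * (((n + 1) / 2 - 1) + (n / 2 - 1)) by omega]
        ring
    _ ≤ _ := by gcongr

theorem mul_le_classDistProd {n : ℕ} {t : ℕ → ℝ} {x h w w₁ w₂ w₃ w₄ : ℝ} (hn : 2 ≤ n) (hh : 0 ≤ h)
    (h₁ : w₁ * (h ^ ((n + 1) / 2 - 1) * ((n + 1) / 2 - 1).factorial) ≤
      ∏ y ∈ (classC1 n t).erase x, |x - y|)
    (h₂ : w₂ * (h ^ (n / 2 - 1) * (n / 2 - 1).factorial) ≤ ∏ y ∈ (classC2 n t).erase x, |x - y|)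
    (h₃ : w₃ * (h ^ ((n + 1) / 2 - 1) * ((n + 1) / 2 - 1).factorial) ≤
      ∏ y ∈ (classC3 n t).erase x, |x - y|)
    (h₄ : w₄ * (h ^ (n / 2 - 1) * (n / 2 - 1).factorial) ≤ ∏ y ∈ (classC4 n t).erase x, |x - y|)
    (hw₁ : 0 ≤ w₁) (hw₂ : 0 ≤ w₂) (hw₃ : 0 ≤ w₃) (hw₄ : 0 ≤ w₄) (hw : w ≤ w₁ * w₂ * w₃ * w₄) :
    w * (h ^ (2 * n - 4) * ((2 * (n / 2 / 2) - 1).factorial : ℝ) ^ 4) ≤ classDistProd n t x := by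
  calc _ ≤ w₁ * w₂ * w₃ * w₄ * (h ^ ((n + 1) / 2 - 1) * ((n + 1) / 2 - 1).factorial *
        (h ^ (n / 2 - 1) * (n / 2 - 1).factorial)) ^ 2 := by
        gcongr
        exact pow_mul_factorial_pow_le_sq hn hh
    _ = w₁ * (h ^ ((n + 1) / 2 - 1) * ((n + 1) / 2 - 1).factorial) *
        (w₂ * (h ^ (n / 2 - 1) * (n / 2 - 1).factorial)) *
        (w₃ * (h ^ ((n + 1) / 2 - 1) * ((n + 1) / 2 - 1).factorial)) *
        (w₄ * (h ^ (n / 2 - 1) * (n / 2 - 1).factorial)) := by ring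
    _ ≤ classDistProd n t x := by rw [classDistProd]; gcongr

theorem le_classDistProd_of_eq_progression {n : ℕ} {t : ℕ → ℝ} {c τ h x : ℝ} (hn : 2 ≤ n)
    (hτ : 0 < τ) (hh : 2 * τ ≤ h)
    (hC₁ : classC1 n t = progression c (2 * h) ((n + 1) / 2))
    (hC₂ : classC2 n t = progression (c + h) (2 * h) (n / 2))
    (hC₃ : classC3 n t = progression (c - τ) (2 * h) ((n + 1) / 2))
    (hC₄ : classC4 n t = progression (c + τ) (2 * h) (n / 2))
    (hx : x ∈ classC1 n t ∪ classC2 n t ∪ classC3 n t ∪ classC4 n t) :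
    h * τ ^ 2 * (h ^ (2 * n - 4) * ((2 * (n / 2 / 2) - 1).factorial : ℝ) ^ 4) ≤
      classDistProd n t x := by
  have hh0 : 0 < h := by linarith
  have hτh : 0 < h - τ := by linarith
  have hm₁ : 0 < (n + 1) / 2 := by omega
  have hm₂ : 0 < n / 2 := by omega
  have own : ∀ {a : ℝ} {m : ℕ}, x ∈ progression a (2 * h) m →
      1 * (h ^ (m - 1) * (m - 1).factorial) ≤ ∏ y ∈ (progression a (2 * h) m).erase x, |x - y| :=
    fun hx => (one_mul _).trans_le (pow_mul_factorial_le_prod_erase_progression hh0 hx)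
  have other : ∀ {a b g : ℝ} {k m : ℕ}, x ∈ progression a (2 * h) k → 0 < m → 0 < g →
      (g ≤ a - b ∧ a - b ≤ 2 * h - g) ∨ (g ≤ b - a ∧ b - a ≤ 2 * h - g) →
      g * (h ^ (m - 1) * (m - 1).factorial) ≤ ∏ y ∈ (progression b (2 * h) m).erase x, |x - y| :=
    fun hx hm hg hab => mul_pow_mul_factorial_le_prod_erase_progression hh0 hm hg fun y hy => by
      rcases hab with ⟨h₁, h₂⟩ | ⟨h₁, h₂⟩
      · exact le_abs_sub_of_mem_progression h₁ h₂ hx hy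
      · exact abs_sub_comm y x ▸ le_abs_sub_of_mem_progression h₁ h₂ hy hx
  have key := @mul_le_classDistProd n t x h (h * τ ^ 2)
  rw [hC₁, hC₂, hC₃, hC₄] at key hx
  rw [mem_union, mem_union, mem_union] at hx
  rcases hx with ((hx | hx) | hx) | hx
  · exact key hn hh0.le (own hx) (other hx hm₂ hh0 (.inr ⟨by linarith, by linarith⟩))
      (other hx hm₁ hτ (.inl ⟨by linarith, by linarith⟩))
      (other hx hm₂ hτ (.inr ⟨by linarith, by linarith⟩))
      zero_le_one hh0.le hτ.le hτ.le (by nlinarith)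
  · have hτ' : τ * τ ≤ (h - τ) * (h - τ) := mul_le_mul (by linarith) (by linarith) hτ.le hτh.le
    exact key hn hh0.le (other hx hm₁ hh0 (.inl ⟨by linarith, by linarith⟩)) (own hx)
      (other hx hm₁ hτh (.inl ⟨by linarith, by linarith⟩))
      (other hx hm₂ hτh (.inl ⟨by linarith, by linarith⟩))
      hh0.le zero_le_one hτh.le hτh.le (by nlinarith [mul_le_mul_of_nonneg_left hτ' hh0.le])
  · exact key hn hh0.le (other hx hm₁ hτ (.inr ⟨by linarith, by linarith⟩))
      (other hx hm₂ hτh (.inr ⟨by linarith, by linarith⟩)) (own hx)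
      (other (g := 2 * τ) hx hm₂ (by positivity) (.inr ⟨by linarith, by linarith⟩))
      hτ.le hτh.le zero_le_one (by positivity) (by nlinarith)
  · exact key hn hh0.le (other hx hm₁ hτ (.inl ⟨by linarith, by linarith⟩))
      (other hx hm₂ hτh (.inr ⟨by linarith, by linarith⟩))
      (other (g := 2 * τ) hx hm₁ (by positivity) (.inl ⟨by linarith, by linarith⟩)) (own hx)
      hτ.le hτh.le (by positivity) zero_le_one (by nlinarith)

/-- Lemma `lem:c-min`: `min_{k=1,2,3,4} c_k^min ≥
τ^{2n-1}·s^{2n-3}·((2⌊⌊n/2⌋/2⌋-1)!)⁴`, i.e. for every point `x` in one of the four classes,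
the product of the distances from `x` to all the other points among `t_1,…,t_{2n}` is at
least this bound. The points `t_j` are as in Proposition `thm:supportlowerboundthm1`:
`t_j = -((sn-2)/2)τ + ((j-2)s/2)τ` for even `j` and
`t_j = t_{4⌈(j+1)/4⌉-2} + (-1)^{(j+1)/2}τ` for odd `j`. -/
theorem class_distance_product_min
    (n : ℕ) (hn : 4 ≤ n) (τ : ℝ) (hτ : 0 < τ) (s : ℝ) (hs : 2 ≤ s)
    (t : ℕ → ℝ)
    (ht_even : ∀ j : ℕ, 1 ≤ j → j ≤ 2 * n → j % 2 = 0 →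
      t j = -((s * (n : ℝ) - 2) / 2) * τ + (((j : ℝ) - 2) * s / 2) * τ)
    (ht_odd : ∀ j : ℕ, 1 ≤ j → j ≤ 2 * n → j % 2 = 1 →
      t j = t (4 * ((j + 4) / 4) - 2) + (-1 : ℝ) ^ ((j + 1) / 2) * τ) :
    ∀ x ∈ classC1 n t ∪ classC2 n t ∪ classC3 n t ∪ classC4 n t,
      τ ^ (2 * n - 1) * s ^ (2 * n - 3) * ((2 * (n / 2 / 2) - 1).factorial : ℝ) ^ 4
        ≤ classDistProd n t x := by
  intro x hx
  obtain ⟨c, hC₁, hC₂, hC₃, hC₄⟩ := exists_classes_eq_progression ht_even ht_odd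
  calc τ ^ (2 * n - 1) * s ^ (2 * n - 3) * ((2 * (n / 2 / 2) - 1).factorial : ℝ) ^ 4
      = s * τ * τ ^ 2 * ((s * τ) ^ (2 * n - 4) * ((2 * (n / 2 / 2) - 1).factorial : ℝ) ^ 4) := by
        rw [show 2 * n - 1 = 2 * n - 4 + 3 by omega, show 2 * n - 3 = 2 * n - 4 + 1 by omega]
        ring
    _ ≤ classDistProd n t x :=
        le_classDistProd_of_eq_progression (by omega) hτ (by nlinarith) hC₁ hC₂ hC₃ hC₄ hx
end
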